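/- arXiv:2209.10295 — 8 statements merged into one kernel-verified Lean document; each statement's English description precedes it below -/
import Mathlib

section
/- Let M = (S, A, Ψ, R, p) be an MDP with discount factor γ ∈ [0,1) and let ~ = (~_S, ~_Ψ) be a visible symmetry of M, with quotient MDP M/~. For a policy π in M/~ define π'(s,a) := π([(s,a)]_Ψ) / N_Ψ(s,a) for (s,a) ∈ Ψ. Then π' is a policy in M, and if π is an optimal policy in M/~ then π' is an optimal policy in M. Moreover, if ~ is simple then π'(s,a) = π(a | [s]_S). -/
/-- A Markov decision process with state type `S`, action type `A` and reward-label
type `Rw` (the countable bounded reward set is the image of `rval`).  `adm s` is the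
finite nonempty set of admissible actions in state `s`, and `p s' r s a` is the
probability of moving to state `s'` receiving the reward labelled `r` when taking
action `a` in state `s` (the dynamic is extended by `0` off the admissible pairs). -/
structure MDP (S A Rw : Type*) where
  adm : S → Finset A
  adm_nonempty : ∀ s, (adm s).Nonempty
  rval : Rw → ℝ
  rval_bdd : ∃ C : ℝ, ∀ r, |rval r| ≤ C
  p : S → Rw → S → A → ℝ
  p_nonneg : ∀ s' r s a, 0 ≤ p s' r s a
  p_adm : ∀ s a, a ∉ adm s → ∀ s' r, p s' r s a = 0
  p_sum : ∀ s a, a ∈ adm s → (∑' x : S × Rw, p x.1 x.2 s a) = 1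

namespace MDP

variable {S A Rw S' A' Rw' : Type*}

/-- A policy: a probability distribution over the admissible actions in each state
(extended by `0` off the admissible pairs). -/
def IsPolicy (M : MDP S A Rw) (π : S → A → ℝ) : Prop :=
  (∀ s a, 0 ≤ π s a) ∧ (∀ s a, a ∉ M.adm s → π s a = 0) ∧
    ∀ s, ∑ a ∈ M.adm s, π s a = 1

/-- `stepReward M π k s` is the expected reward `E_{π,p}[R_{k+1} | S_0 = s]`
received at step `k` of the trajectory generated by the policy `π` started at `s`. -/
noncomputable def stepReward (M : MDP S A Rw) (π : S → A → ℝ) : ℕ → S → ℝ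
  | 0, s => ∑ a ∈ M.adm s, π s a * ∑' x : S × Rw, M.p x.1 x.2 s a * M.rval x.2
  | k + 1, s => ∑ a ∈ M.adm s, π s a *
      ∑' s' : S, (∑' r : Rw, M.p s' r s a) * M.stepReward π k s'

/-- The value function `V_π(s) = E_{π,p}[∑_k γ^k R_{k+1} | S_0 = s]`. -/
noncomputable def value (M : MDP S A Rw) (γ : ℝ) (π : S → A → ℝ) (s : S) : ℝ :=
  ∑' k : ℕ, γ ^ k * M.stepReward π k s

/-- The optimal value function `V_*(s) = sup_π V_π(s)`. -/
noncomputable def optValue (M : MDP S A Rw) (γ : ℝ) (s : S) : ℝ :=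
  ⨆ π : {π : S → A → ℝ // M.IsPolicy π}, M.value γ π.1 s

/-- A policy is optimal if its value function coincides with the optimal value
function in every state. -/
def IsOptimal (M : MDP S A Rw) (γ : ℝ) (π : S → A → ℝ) : Prop :=
  M.IsPolicy π ∧ ∀ s, M.value γ π s = M.optValue γ s

/-- The set `Ψ` of admissible state-action pairs, as a type. -/
abbrev Pairs (M : MDP S A Rw) : Type _ := {q : S × A // q.2 ∈ M.adm q.1}

/-- A visible symmetry of an MDP: an equivalence relation `eqS` on states together
with an equivalence relation `eqP` on admissible state-action pairs such that
related pairs have related states, any admissible pair can be transported to any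
state related to its own, and related pairs have the same dynamic on
`eqS`-equivalence classes. -/
structure VisibleSymmetry (M : MDP S A Rw) where
  eqS : Setoid S
  eqP : Setoid M.Pairs
  lift_action : ∀ (q : M.Pairs) (s2 : S), eqS.r q.1.1 s2 →
    ∃ (a2 : A) (h2 : a2 ∈ M.adm s2), eqP.r q ⟨(s2, a2), h2⟩
  rel_states : ∀ q1 q2 : M.Pairs, eqP.r q1 q2 → eqS.r q1.1.1 q2.1.1
  rel_dyn : ∀ q1 q2 : M.Pairs, eqP.r q1 q2 → ∀ (s' : S) (r : Rw),
    (∑' x : {x : S // eqS.r x s'}, M.p x.1 r q1.1.1 q1.1.2) =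
      ∑' x : {x : S // eqS.r x s'}, M.p x.1 r q2.1.1 q2.1.2

/-- A visible symmetry is simple if related state-action pairs carry the same action. -/
def VisibleSymmetry.Simple {M : MDP S A Rw} (V : M.VisibleSymmetry) : Prop :=
  ∀ q1 q2 : M.Pairs, V.eqP.r q1 q2 → q1.1.2 = q2.1.2

/-- `N_Ψ(s,a)`: the number of admissible actions in `s` whose pair with `s` is
`eqP`-equivalent to `(s,a)`. -/
noncomputable def VisibleSymmetry.N {M : MDP S A Rw} (V : M.VisibleSymmetry)
    (s : S) (a : A) (h : a ∈ M.adm s) : ℕ :=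
  Set.ncard {a' : A | ∃ h' : a' ∈ M.adm s, V.eqP.r ⟨(s, a), h⟩ ⟨(s, a'), h'⟩}

/-- A relabeling of the MDP `M` to the MDP `M'`: a bijection `f` on states and, for each
state `s`, a bijection `g s` from the admissible actions of `s` to those of `f s`,
which together transport the dynamic of `M` to that of `M'`. -/
structure Relabeling (M : MDP S A Rw) (M' : MDP S' A' Rw) where
  f : S → S'
  g : S → A → A'
  f_bij : Function.Bijective f
  g_bij : ∀ s : S, Set.BijOn (g s) (M.adm s : Set A) (M'.adm (f s) : Set A')
  rval_eq : ∀ r : Rw, M'.rval r = M.rval r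
  dyn : ∀ (s : S) (a : A), a ∈ M.adm s → ∀ (st : S) (r : Rw),
    M.p st r s a = M'.p (f st) r (f s) (g s a)

end MDP

/-!
Let `W` be the value function of the optimal policy `π` of `M/~`. Related pairs have the same
dynamic on classes, so the one-step backup of `W ∘ [·]` at `(s, a)` in `M` is the backup of `W`
at `[(s, a)]` in `M/~`. As `π'` spreads the mass `π([s], Y)` evenly over the `N_Ψ` actions at `s`
in the class `Y`, `W ∘ [·]` is a fixed point of the Bellman operator of `π'`; as `π` is optimal,
`W`, hence `W ∘ [·]`, dominates all its one-step backups. For `γ < 1` a bounded function with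
these two properties is the value of `π'` and dominates the value of every policy.
-/

section WeightedSum

variable {ι : Type*} {w g g₁ g₂ : ι → ℝ} {B B₁ B₂ : ℝ}

lemma summable_mul_of_abs_le (hw : Summable w) (hw0 : ∀ i, 0 ≤ w i) (hg : ∀ i, |g i| ≤ B) :
    Summable fun i => w i * g i :=
  Summable.of_norm_bounded (hw.mul_right B) fun i => by
    rw [Real.norm_eq_abs, abs_mul, abs_of_nonneg (hw0 i)]
    exact mul_le_mul_of_nonneg_left (hg i) (hw0 i)

lemma tsum_mul_le_tsum_mul (hw : Summable w) (hw0 : ∀ i, 0 ≤ w i)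
    (hg₁ : ∀ i, |g₁ i| ≤ B₁) (hg₂ : ∀ i, |g₂ i| ≤ B₂) (h : ∀ i, g₁ i ≤ g₂ i) :
    ∑' i, w i * g₁ i ≤ ∑' i, w i * g₂ i :=
  Summable.tsum_le_tsum (fun i => mul_le_mul_of_nonneg_left (h i) (hw0 i))
    (summable_mul_of_abs_le hw hw0 hg₁) (summable_mul_of_abs_le hw hw0 hg₂)

lemma abs_tsum_mul_le (hw : Summable w) (hw0 : ∀ i, 0 ≤ w i) (hg : ∀ i, |g i| ≤ B) :
    |∑' i, w i * g i| ≤ (∑' i, w i) * B := by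
  have hB : ∀ _ : ι, |B| ≤ |B| := fun _ => le_rfl
  have hnegB : ∀ _ : ι, |-B| ≤ |B| := fun _ => (abs_neg B).le
  rw [abs_le, ← mul_neg, ← tsum_mul_right, ← tsum_mul_right]
  exact ⟨tsum_mul_le_tsum_mul hw hw0 hnegB hg fun i => (abs_le.1 (hg i)).1,
    tsum_mul_le_tsum_mul hw hw0 hg hB fun i => (abs_le.1 (hg i)).2⟩

end WeightedSum

namespace MDP

variable {S A Rw : Type*} (M : MDP S A Rw)

noncomputable def trans (s : S) (a : A) (s' : S) : ℝ :=
  ∑' r : Rw, M.p s' r s a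

noncomputable def expReward (s : S) (a : A) : ℝ :=
  ∑' x : S × Rw, M.p x.1 x.2 s a * M.rval x.2

noncomputable def backup (γ : ℝ) (W : S → ℝ) (s : S) (a : A) : ℝ :=
  M.expReward s a + γ * ∑' s', M.trans s a s' * W s'

noncomputable def bellman (γ : ℝ) (π : S → A → ℝ) (W : S → ℝ) (s : S) : ℝ :=
  ∑ a ∈ M.adm s, π s a * M.backup γ W s a

variable {M} {γ : ℝ} {π : S → A → ℝ} {s : S} {a : A} {B B₁ B₂ C : ℝ} {W W₁ W₂ : S → ℝ}

lemma summable_p (h : a ∈ M.adm s) : Summable fun x : S × Rw => M.p x.1 x.2 s a := by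
  by_contra hs
  simpa [tsum_eq_zero_of_not_summable hs] using M.p_sum s a h

lemma trans_nonneg (s : S) (a : A) (s' : S) : 0 ≤ M.trans s a s' :=
  tsum_nonneg fun r => M.p_nonneg s' r s a

lemma summable_trans (h : a ∈ M.adm s) : Summable (M.trans s a) :=
  (summable_p h).prod

lemma tsum_trans_mul_eq_tsum_p_mul (h : a ∈ M.adm s) {g : S → ℝ} (hg : ∀ s', |g s'| ≤ B) :
    ∑' s', M.trans s a s' * g s' = ∑' x : S × Rw, M.p x.1 x.2 s a * g x.1 := by
  have hsum := summable_mul_of_abs_le (summable_p h) (fun x => M.p_nonneg _ _ _ _)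
    (fun x => hg x.1)
  rw [hsum.tsum_prod' fun s' => hsum.comp_injective (Prod.mk_right_injective s')]
  exact tsum_congr fun s' => tsum_mul_right.symm

lemma tsum_trans (h : a ∈ M.adm s) : ∑' s', M.trans s a s' = 1 := by
  simpa [M.p_sum s a h] using tsum_trans_mul_eq_tsum_p_mul h (g := fun _ => 1) (B := 1) (by simp)

lemma summable_trans_mul (h : a ∈ M.adm s) {g : S → ℝ} (hg : ∀ s', |g s'| ≤ B) :
    Summable fun s' => M.trans s a s' * g s' :=
  summable_mul_of_abs_le (summable_trans h) (trans_nonneg s a) hg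

lemma abs_tsum_trans_mul_le (h : a ∈ M.adm s) {g : S → ℝ} (hg : ∀ s', |g s'| ≤ B) :
    |∑' s', M.trans s a s' * g s'| ≤ B := by
  simpa [tsum_trans h] using abs_tsum_mul_le (summable_trans h) (trans_nonneg s a) hg

lemma abs_expReward_le (hC : ∀ r, |M.rval r| ≤ C) (h : a ∈ M.adm s) :
    |M.expReward s a| ≤ C := by
  simpa [expReward, M.p_sum s a h] using
    abs_tsum_mul_le (summable_p h) (fun x => M.p_nonneg _ _ _ _) (fun x => hC x.2)

lemma IsPolicy.sum_mul_le (hπ : M.IsPolicy π) {f : A → ℝ} (hf : ∀ a ∈ M.adm s, f a ≤ B) :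
    ∑ a ∈ M.adm s, π s a * f a ≤ B :=
  calc ∑ a ∈ M.adm s, π s a * f a ≤ ∑ a ∈ M.adm s, π s a * B :=
        Finset.sum_le_sum fun a ha => mul_le_mul_of_nonneg_left (hf a ha) (hπ.1 s a)
    _ = B := by rw [← Finset.sum_mul, hπ.2.2 s, one_mul]

lemma IsPolicy.le_sum_mul (hπ : M.IsPolicy π) {f : A → ℝ} (hf : ∀ a ∈ M.adm s, B ≤ f a) :
    B ≤ ∑ a ∈ M.adm s, π s a * f a :=
  calc B = ∑ a ∈ M.adm s, π s a * B := by rw [← Finset.sum_mul, hπ.2.2 s, one_mul]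
    _ ≤ ∑ a ∈ M.adm s, π s a * f a :=
        Finset.sum_le_sum fun a ha => mul_le_mul_of_nonneg_left (hf a ha) (hπ.1 s a)

lemma IsPolicy.abs_sum_mul_le (hπ : M.IsPolicy π) {f : A → ℝ} (hf : ∀ a ∈ M.adm s, |f a| ≤ B) :
    |∑ a ∈ M.adm s, π s a * f a| ≤ B :=
  abs_le.2 ⟨hπ.le_sum_mul fun a ha => (abs_le.1 (hf a ha)).1,
    hπ.sum_mul_le fun a ha => (abs_le.1 (hf a ha)).2⟩

lemma abs_stepReward_le (hC : ∀ r, |M.rval r| ≤ C) (hπ : M.IsPolicy π) :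
    ∀ k s, |M.stepReward π k s| ≤ C
  | 0, _ => hπ.abs_sum_mul_le fun _ ha => abs_expReward_le hC ha
  | k + 1, _ => hπ.abs_sum_mul_le fun _ ha => abs_tsum_trans_mul_le ha (abs_stepReward_le hC hπ k)

lemma summable_discounted (hγ0 : 0 ≤ γ) (hγ1 : γ < 1) {u : ℕ → ℝ} (hu : ∀ k, |u k| ≤ C) :
    Summable fun k => γ ^ k * u k :=
  summable_mul_of_abs_le (summable_geometric_of_lt_one hγ0 hγ1) (pow_nonneg hγ0) hu

lemma abs_value_le (hγ0 : 0 ≤ γ) (hγ1 : γ < 1) (hC : ∀ r, |M.rval r| ≤ C)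
    (hπ : M.IsPolicy π) (s : S) : |M.value γ π s| ≤ (1 - γ)⁻¹ * C := by
  simpa [value, tsum_geometric_of_lt_one hγ0 hγ1] using
    abs_tsum_mul_le (summable_geometric_of_lt_one hγ0 hγ1) (pow_nonneg hγ0)
      (abs_stepReward_le hC hπ · s)

lemma exists_abs_value_le (hγ0 : 0 ≤ γ) (hγ1 : γ < 1) :
    ∃ B, ∀ π, M.IsPolicy π → ∀ s, |M.value γ π s| ≤ B := by
  obtain ⟨C, hC⟩ := M.rval_bdd
  exact ⟨_, fun π hπ s => abs_value_le hγ0 hγ1 hC hπ s⟩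

lemma value_le_optValue (hγ0 : 0 ≤ γ) (hγ1 : γ < 1) (hπ : M.IsPolicy π) (s : S) :
    M.value γ π s ≤ M.optValue γ s := by
  obtain ⟨B, hB⟩ := exists_abs_value_le (M := M) hγ0 hγ1
  refine le_ciSup (f := fun σ : {π // M.IsPolicy π} => M.value γ σ.1 s) ⟨B, ?_⟩ ⟨π, hπ⟩
  rintro _ ⟨σ, rfl⟩
  exact (abs_le.1 (hB σ.1 σ.2 s)).2

lemma hasSum_discounted_tsum_trans_mul (hγ0 : 0 ≤ γ) (hγ1 : γ < 1) (hπ : M.IsPolicy π)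
    (ha : a ∈ M.adm s) :
    HasSum (fun k => γ ^ k * ∑' s', M.trans s a s' * M.stepReward π k s')
      (∑' s', M.trans s a s' * M.value γ π s') := by
  obtain ⟨C, hC⟩ := M.rval_bdd
  have hsr := abs_stepReward_le hC hπ
  have hjoint : Summable (Function.uncurry fun k s' =>
      M.trans s a s' * (γ ^ k * M.stepReward π k s')) := by
    refine Summable.of_norm_bounded (((summable_mul_of_summable_norm
      (summable_geometric_of_lt_one hγ0 hγ1).norm (summable_trans ha).norm)).mul_right C)
      fun x => ?_
    rw [Real.norm_eq_abs, Function.uncurry_apply_pair, abs_mul, abs_mul,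
      abs_of_nonneg (trans_nonneg s a x.2), abs_of_nonneg (pow_nonneg hγ0 x.1)]
    calc M.trans s a x.2 * (γ ^ x.1 * |M.stepReward π x.1 x.2|)
        ≤ M.trans s a x.2 * (γ ^ x.1 * C) := by
          gcongr
          · exact trans_nonneg s a x.2
          · exact hsr x.1 x.2
      _ = γ ^ x.1 * M.trans s a x.2 * C := by ring
  refine (summable_discounted hγ0 hγ1 fun k => abs_tsum_trans_mul_le ha (hsr k)).hasSum_iff.2 ?_
  calc ∑' k, γ ^ k * ∑' s', M.trans s a s' * M.stepReward π k s'
      = ∑' k, ∑' s', M.trans s a s' * (γ ^ k * M.stepReward π k s') :=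
        tsum_congr fun k => by rw [← tsum_mul_left]; exact tsum_congr fun s' => by ring
    _ = ∑' s', ∑' k, M.trans s a s' * (γ ^ k * M.stepReward π k s') := hjoint.tsum_comm.symm
    _ = ∑' s', M.trans s a s' * M.value γ π s' := tsum_congr fun s' => tsum_mul_left

lemma value_eq_bellman (hγ0 : 0 ≤ γ) (hγ1 : γ < 1) (hπ : M.IsPolicy π) (s : S) :
    M.value γ π s = M.bellman γ π (M.value γ π) s := by
  have hsucc : HasSum (fun k => γ ^ (k + 1) * M.stepReward π (k + 1) s)
      (γ * ∑ a ∈ M.adm s, π s a * ∑' s', M.trans s a s' * M.value γ π s') := by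
    refine ((hasSum_sum (s := M.adm s) fun a ha =>
      (hasSum_discounted_tsum_trans_mul hγ0 hγ1 hπ ha).mul_left (π s a)).mul_left γ).congr_fun
      fun k => ?_
    show _ * ∑ a ∈ M.adm s, π s a * ∑' s', M.trans s a s' * M.stepReward π k s' = _
    rw [Finset.mul_sum, Finset.mul_sum]
    exact Finset.sum_congr rfl fun a _ => by ring
  rw [value, ((hasSum_nat_add_iff (f := fun k => γ ^ k * M.stepReward π k s) 1).1 hsucc).tsum_eq]
  show _ = ∑ a ∈ M.adm s, π s a * (M.expReward s a + _)
  simp only [mul_add, Finset.sum_add_distrib, Finset.mul_sum]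
  rw [Finset.sum_range_one, pow_zero, one_mul, add_comm]
  congr 1
  exact Finset.sum_congr rfl fun a _ => by ring

lemma le_tsum_trans_mul (ha : a ∈ M.adm s) {m : ℝ} (hW : ∀ s', |W s'| ≤ B)
    (hm : ∀ s', m ≤ W s') : m ≤ ∑' s', M.trans s a s' * W s' := by
  have hconst : ∀ _ : S, |m| ≤ |m| := fun _ => le_rfl
  simpa [tsum_mul_right, tsum_trans ha] using
    tsum_mul_le_tsum_mul (summable_trans ha) (trans_nonneg s a) hconst hW hm

lemma backup_sub_backup (ha : a ∈ M.adm s) (hW₁ : ∀ s', |W₁ s'| ≤ B₁)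
    (hW₂ : ∀ s', |W₂ s'| ≤ B₂) :
    M.backup γ W₁ s a - M.backup γ W₂ s a =
      γ * ∑' s', M.trans s a s' * (W₁ s' - W₂ s') := by
  rw [backup, backup, add_sub_add_left_eq_sub, ← mul_sub,
    ← (summable_trans_mul ha hW₁).tsum_sub (summable_trans_mul ha hW₂)]
  simp only [mul_sub]

lemma backup_mono (hγ0 : 0 ≤ γ) (ha : a ∈ M.adm s) (hW₁ : ∀ s', |W₁ s'| ≤ B₁)
    (hW₂ : ∀ s', |W₂ s'| ≤ B₂) (h : ∀ s', W₁ s' ≤ W₂ s') :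
    M.backup γ W₁ s a ≤ M.backup γ W₂ s a :=
  add_le_add_right (mul_le_mul_of_nonneg_left
    (tsum_mul_le_tsum_mul (summable_trans ha) (trans_nonneg s a) hW₁ hW₂ h) hγ0) _

lemma bellman_sub_bellman (hW₁ : ∀ s', |W₁ s'| ≤ B₁) (hW₂ : ∀ s', |W₂ s'| ≤ B₂) (s : S) :
    M.bellman γ π W₁ s - M.bellman γ π W₂ s =
      γ * ∑ a ∈ M.adm s, π s a * ∑' s', M.trans s a s' * (W₁ s' - W₂ s') := by
  rw [bellman, bellman, ← Finset.sum_sub_distrib, Finset.mul_sum]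
  exact Finset.sum_congr rfl fun a ha => by rw [← mul_sub, backup_sub_backup ha hW₁ hW₂]; ring

/-- Since `γ < 1`, the infimum `m` of `D` satisfies `γ m ≤ m`, hence `m ≥ 0`. -/
lemma nonneg_of_discounted_le (hγ0 : 0 ≤ γ) (hγ1 : γ < 1) (hπ : M.IsPolicy π) {D : S → ℝ}
    (hD : ∀ s, |D s| ≤ B)
    (h : ∀ s, γ * ∑ a ∈ M.adm s, π s a * ∑' s', M.trans s a s' * D s' ≤ D s) (s : S) :
    0 ≤ D s := by
  have : Nonempty S := ⟨s⟩
  have hinf : ∀ s, ⨅ s, D s ≤ D s :=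
    ciInf_le ⟨-B, by rintro _ ⟨s, rfl⟩; exact (abs_le.1 (hD s)).1⟩
  have hγinf : γ * ⨅ s, D s ≤ ⨅ s, D s := le_ciInf fun s' =>
    (mul_le_mul_of_nonneg_left (hπ.le_sum_mul fun a ha => le_tsum_trans_mul ha hD hinf) hγ0).trans
      (h s')
  nlinarith [hinf s]

lemma value_le_of_bellman_le (hγ0 : 0 ≤ γ) (hγ1 : γ < 1) (hπ : M.IsPolicy π)
    (hW : ∀ s, |W s| ≤ B) (h : ∀ s, M.bellman γ π W s ≤ W s) (s : S) :
    M.value γ π s ≤ W s := by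
  obtain ⟨C, hC⟩ := exists_abs_value_le (M := M) hγ0 hγ1
  refine sub_nonneg.1 (nonneg_of_discounted_le hγ0 hγ1 hπ (D := fun s => W s - M.value γ π s)
    (fun s => (abs_sub _ _).trans (add_le_add (hW s) (hC π hπ s))) (fun s => ?_) s)
  rw [← bellman_sub_bellman hW (hC π hπ)]
  linarith [h s, value_eq_bellman hγ0 hγ1 hπ s]

lemma le_value_of_le_bellman (hγ0 : 0 ≤ γ) (hγ1 : γ < 1) (hπ : M.IsPolicy π)
    (hW : ∀ s, |W s| ≤ B) (h : ∀ s, W s ≤ M.bellman γ π W s) (s : S) :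
    W s ≤ M.value γ π s := by
  obtain ⟨C, hC⟩ := exists_abs_value_le (M := M) hγ0 hγ1
  refine sub_nonneg.1 (nonneg_of_discounted_le hγ0 hγ1 hπ (D := fun s => M.value γ π s - W s)
    (fun s => (abs_sub _ _).trans (add_le_add (hC π hπ s) (hW s))) (fun s => ?_) s)
  rw [← bellman_sub_bellman (hC π hπ) hW]
  linarith [h s, value_eq_bellman hγ0 hγ1 hπ s]

lemma IsPolicy.update_dirac [DecidableEq S] [DecidableEq A] (hπ : M.IsPolicy π) (ha : a ∈ M.adm s) :
    M.IsPolicy (Function.update π s fun a' => if a' = a then 1 else 0) := by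
  refine ⟨fun s' a' => ?_, fun s' a' ha' => ?_, fun s' => ?_⟩ <;>
    rcases eq_or_ne s' s with rfl | hs'
  · simp only [Function.update_self]
    split_ifs <;> norm_num
  · simpa [hs'] using hπ.1 s' a'
  · simp only [Function.update_self, ite_eq_right_iff, one_ne_zero, imp_false]
    rintro rfl
    exact ha' ha
  · simpa [hs'] using hπ.2.1 s' a' ha'
  · simp [ha]
  · simpa [hs'] using hπ.2.2 s'

/-- If some action `a` beat the optimal policy `π` at `s`, the policy that plays `a` at `s`
and follows `π` elsewhere would be strictly better than `π` at `s`. -/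
lemma backup_value_le_of_isOptimal (hγ0 : 0 ≤ γ) (hγ1 : γ < 1) (hπ : M.IsOptimal γ π)
    (ha : a ∈ M.adm s) : M.backup γ (M.value γ π) s a ≤ M.value γ π s := by
  classical
  obtain ⟨B, hB⟩ := exists_abs_value_le (M := M) hγ0 hγ1
  by_contra! hlt
  set ρ := Function.update π s fun a' => if a' = a then 1 else 0
  have hρ : M.IsPolicy ρ := hπ.1.update_dirac ha
  have hρs : ∀ W, M.bellman γ ρ W s = M.backup γ W s a := by
    intro W
    simp [bellman, ρ, ha]
  have hle : ∀ s', M.value γ π s' ≤ M.bellman γ ρ (M.value γ π) s' := by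
    intro s'
    rcases eq_or_ne s' s with rfl | hs'
    · rw [hρs]
      exact hlt.le
    · rw [value_eq_bellman hγ0 hγ1 hπ.1 s']
      simp [bellman, ρ, Function.update_of_ne hs']
  have hVρ := le_value_of_le_bellman hγ0 hγ1 hρ (hB π hπ.1) hle
  have := calc M.value γ π s < M.backup γ (M.value γ π) s a := hlt
    _ ≤ M.backup γ (M.value γ ρ) s a := backup_mono hγ0 ha (hB π hπ.1) (hB ρ hρ) hVρ
    _ = M.value γ ρ s := by rw [← hρs, ← value_eq_bellman hγ0 hγ1 hρ]
    _ ≤ M.optValue γ s := value_le_optValue hγ0 hγ1 hρ s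
    _ = M.value γ π s := (hπ.2 s).symm
  exact lt_irrefl _ this

lemma isOptimal_of_backup_le_of_le_bellman (hγ0 : 0 ≤ γ) (hγ1 : γ < 1) (hπ : M.IsPolicy π)
    (hW : ∀ s, |W s| ≤ B) (hsup : ∀ s, ∀ a ∈ M.adm s, M.backup γ W s a ≤ W s)
    (hfix : ∀ s, W s ≤ M.bellman γ π W s) : M.IsOptimal γ π := by
  have : Nonempty {σ // M.IsPolicy σ} := ⟨⟨π, hπ⟩⟩
  refine ⟨hπ, fun s => le_antisymm (value_le_optValue hγ0 hγ1 hπ s) (ciSup_le fun σ => ?_)⟩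
  calc M.value γ σ.1 s ≤ W s :=
        value_le_of_bellman_le hγ0 hγ1 σ.2 hW (fun s => σ.2.sum_mul_le (hsup s)) s
    _ ≤ M.value γ π s := le_value_of_le_bellman hγ0 hγ1 hπ hW hfix s

end MDP

namespace MDP.VisibleSymmetry

open Finset
open scoped Classical

variable {S A Rw : Type*} {M : MDP S A Rw} (V : M.VisibleSymmetry)
  {Q : MDP (Quotient V.eqS) (Quotient V.eqP) Rw} {π : Quotient V.eqS → Quotient V.eqP → ℝ}
  {γ B : ℝ}

structure IsQuotient (Q : MDP (Quotient V.eqS) (Quotient V.eqP) Rw) : Prop where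
  rval_eq : Q.rval = M.rval
  mk_mem_adm_iff : ∀ (q : M.Pairs) (X : Quotient V.eqS),
    Quotient.mk V.eqP q ∈ Q.adm X ↔ Quotient.mk V.eqS q.1.1 = X
  p_mk : ∀ (q : M.Pairs) (s' : S) (r : Rw),
    Q.p (Quotient.mk V.eqS s') r (Quotient.mk V.eqS q.1.1) (Quotient.mk V.eqP q) =
      ∑' x : {x : S // V.eqS.r x s'}, M.p x.1 r q.1.1 q.1.2

noncomputable def pullback (π : Quotient V.eqS → Quotient V.eqP → ℝ) (s : S) (a : A) : ℝ :=
  if h : a ∈ M.adm s then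
    π (Quotient.mk V.eqS s) (Quotient.mk V.eqP ⟨(s, a), h⟩) / V.N s a h
  else 0

def mkPair (s : S) (b : M.adm s) : Quotient V.eqP :=
  Quotient.mk V.eqP ⟨(s, b.1), b.2⟩

variable {V}

lemma IsQuotient.mk_mem_adm (hQ : V.IsQuotient Q) (q : M.Pairs) :
    Quotient.mk V.eqP q ∈ Q.adm (Quotient.mk V.eqS q.1.1) :=
  (hQ.mk_mem_adm_iff q _).2 rfl

lemma image_mkPair (hQ : V.IsQuotient Q) (s : S) :
    (M.adm s).attach.image (V.mkPair s) = Q.adm (Quotient.mk V.eqS s) := by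
  ext Y
  simp only [mem_image, mem_attach, true_and]
  constructor
  · rintro ⟨b, rfl⟩
    exact hQ.mk_mem_adm _
  · induction Y using Quotient.inductionOn with | h q => ?_
    intro hY
    obtain ⟨a, ha, hrel⟩ :=
      V.lift_action q s (Quotient.exact ((hQ.mk_mem_adm_iff q _).1 hY))
    exact ⟨⟨a, ha⟩, (Quotient.sound hrel).symm⟩

lemma N_eq_card (s : S) (b : M.adm s) :
    V.N s b.1 b.2 = #{c ∈ (M.adm s).attach | V.mkPair s c = V.mkPair s b} := by
  rw [VisibleSymmetry.N, ← card_image_of_injective _ Subtype.val_injective,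
    ← Set.ncard_coe_finset]
  congr 1
  ext a
  simp only [Set.mem_ofPred_eq, coe_image, Set.mem_image, mem_coe, mem_filter, mem_attach,
    true_and]
  constructor
  · rintro ⟨ha, hrel⟩
    exact ⟨⟨a, ha⟩, (Quotient.sound hrel).symm, rfl⟩
  · rintro ⟨c, hc, rfl⟩
    exact ⟨c.2, Quotient.exact hc.symm⟩

lemma N_eq_one_of_simple (hV : V.Simple) (s : S) (a : A) (h : a ∈ M.adm s) : V.N s a h = 1 := by
  have hset : {a' : A | ∃ h' : a' ∈ M.adm s, V.eqP.r ⟨(s, a), h⟩ ⟨(s, a'), h'⟩} = {a} := by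
    ext a'
    simp only [Set.mem_ofPred_eq, Set.mem_singleton_iff]
    constructor
    · rintro ⟨h', hrel⟩
      exact (hV _ _ hrel).symm
    · rintro rfl
      exact ⟨h, V.eqP.refl _⟩
  rw [VisibleSymmetry.N, hset, Set.ncard_singleton]

/-- Each class `Y` of actions at `[s]` contains exactly `N_Ψ` actions at `s`, each receiving
the weight `π([s], Y) / N_Ψ`. -/
lemma sum_pullback_mul (hQ : V.IsQuotient Q) (π : Quotient V.eqS → Quotient V.eqP → ℝ) (s : S)
    (F : Quotient V.eqP → ℝ) :
    ∑ b ∈ (M.adm s).attach, V.pullback π s b * F (V.mkPair s b) =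
      ∑ Y ∈ Q.adm (Quotient.mk V.eqS s), π (Quotient.mk V.eqS s) Y * F Y := by
  have hterm : ∀ b : M.adm s, V.pullback π s b * F (V.mkPair s b) =
      π (Quotient.mk V.eqS s) (V.mkPair s b) * F (V.mkPair s b) /
        #{c ∈ (M.adm s).attach | V.mkPair s c = V.mkPair s b} := by
    intro b
    rw [pullback, dif_pos b.2, N_eq_card, div_mul_eq_mul_div]
    rfl
  rw [sum_congr rfl fun b _ => hterm b, sum_comp (fun Y => π (Quotient.mk V.eqS s) Y * F Y /
    #{c ∈ (M.adm s).attach | V.mkPair s c = Y}) (V.mkPair s), ← image_mkPair hQ s]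
  refine sum_congr rfl fun Y hY => ?_
  obtain ⟨b, -, rfl⟩ := mem_image.1 hY
  have hb : (#{c ∈ (M.adm s).attach | V.mkPair s c = V.mkPair s b} : ℝ) ≠ 0 :=
    Nat.cast_ne_zero.2 (card_ne_zero_of_mem (mem_filter.2 ⟨mem_attach _ b, rfl⟩))
  rw [nsmul_eq_mul, mul_div_cancel₀ _ hb]

lemma IsQuotient.isPolicy_pullback (hQ : V.IsQuotient Q) (hπ : Q.IsPolicy π) :
    M.IsPolicy (V.pullback π) := by
  refine ⟨fun s a => ?_, fun s a ha => dif_neg ha, fun s => ?_⟩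
  · unfold pullback
    split_ifs
    exacts [div_nonneg (hπ.1 _ _) (Nat.cast_nonneg _), le_rfl]
  · simpa [sum_attach, hπ.2.2] using V.sum_pullback_mul hQ π s 1

lemma Simple.pullback_eq (hV : V.Simple) (π : Quotient V.eqS → Quotient V.eqP → ℝ)
    {s : S} {a : A} (h : a ∈ M.adm s) :
    V.pullback π s a = π (Quotient.mk V.eqS s) (Quotient.mk V.eqP ⟨(s, a), h⟩) := by
  rw [pullback, dif_pos h, N_eq_one_of_simple hV, Nat.cast_one, div_one]

/-- Summing the dynamic of `q` over the fibre of `([s'], r)` gives `p̄([s'], r | [q])`. -/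
lemma tsum_p_mul_mk (hQ : V.IsQuotient Q) (q : M.Pairs) {f : Quotient V.eqS × Rw → ℝ}
    (hf : ∀ y, |f y| ≤ B) :
    ∑' x : S × Rw, M.p x.1 x.2 q.1.1 q.1.2 * f (Quotient.mk V.eqS x.1, x.2) =
      ∑' y, Q.p y.1 y.2 (Quotient.mk V.eqS q.1.1) (Quotient.mk V.eqP q) * f y := by
  set φ : S × Rw → Quotient V.eqS × Rw := fun x => (Quotient.mk V.eqS x.1, x.2)
  have hsum := summable_mul_of_abs_le (summable_p q.2) (fun x => M.p_nonneg _ _ _ _)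
    (fun x => hf (φ x))
  rw [← (hsum.hasSum.tsum_fiberwise φ).tsum_eq]
  refine tsum_congr fun ⟨X, r⟩ => ?_
  induction X using Quotient.inductionOn with | h t => ?_
  let e : {x : S // V.eqS.r x t} ≃ ↥(φ ⁻¹' {(Quotient.mk V.eqS t, r)}) :=
    { toFun := fun x => ⟨(x.1, r), by simp [φ, Quotient.sound x.2]⟩
      invFun := fun x => ⟨x.1.1, Quotient.exact (congrArg Prod.fst x.2)⟩
      left_inv := fun _ => rfl
      right_inv := fun x => Subtype.ext (Prod.ext rfl (congrArg Prod.snd x.2).symm) }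
  rw [← e.tsum_eq, hQ.p_mk q t r, ← tsum_mul_right]
  exact tsum_congr fun x => by simp [e, φ, Quotient.sound x.2]

lemma tsum_trans_mul_mk (hQ : V.IsQuotient Q) (q : M.Pairs) {g : Quotient V.eqS → ℝ}
    (hg : ∀ X, |g X| ≤ B) :
    ∑' s', M.trans q.1.1 q.1.2 s' * g (Quotient.mk V.eqS s') =
      ∑' X, Q.trans (Quotient.mk V.eqS q.1.1) (Quotient.mk V.eqP q) X * g X := by
  rw [tsum_trans_mul_eq_tsum_p_mul q.2 (fun s' => hg _),
    tsum_trans_mul_eq_tsum_p_mul (hQ.mk_mem_adm q) hg]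
  exact tsum_p_mul_mk hQ q (f := fun y => g y.1) (fun y => hg y.1)

lemma expReward_mk (hQ : V.IsQuotient Q) (q : M.Pairs) :
    M.expReward q.1.1 q.1.2 = Q.expReward (Quotient.mk V.eqS q.1.1) (Quotient.mk V.eqP q) := by
  obtain ⟨C, hC⟩ := M.rval_bdd
  rw [expReward, expReward, hQ.rval_eq]
  exact tsum_p_mul_mk hQ q (f := fun y => M.rval y.2) (fun y => hC y.2)

lemma backup_comp_mk (hQ : V.IsQuotient Q) {W : Quotient V.eqS → ℝ} (hW : ∀ X, |W X| ≤ B)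
    (q : M.Pairs) :
    M.backup γ (W ∘ Quotient.mk V.eqS) q.1.1 q.1.2 =
      Q.backup γ W (Quotient.mk V.eqS q.1.1) (Quotient.mk V.eqP q) := by
  rw [backup, backup, expReward_mk hQ q, ← tsum_trans_mul_mk hQ q hW]
  rfl

lemma bellman_pullback (hQ : V.IsQuotient Q) {W : Quotient V.eqS → ℝ} (hW : ∀ X, |W X| ≤ B)
    (s : S) :
    M.bellman γ (V.pullback π) (W ∘ Quotient.mk V.eqS) s =
      Q.bellman γ π W (Quotient.mk V.eqS s) := by
  rw [bellman, bellman, ← Finset.sum_attach, ← V.sum_pullback_mul hQ π s]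
  exact Finset.sum_congr rfl fun b _ => by rw [backup_comp_mk hQ hW ⟨(s, b.1), b.2⟩]; rfl

theorem IsQuotient.isOptimal_pullback (hQ : V.IsQuotient Q) (hγ0 : 0 ≤ γ) (hγ1 : γ < 1)
    (hπ : Q.IsOptimal γ π) : M.IsOptimal γ (V.pullback π) := by
  obtain ⟨B, hB⟩ := Q.exists_abs_value_le hγ0 hγ1
  have hW := hB π hπ.1
  refine isOptimal_of_backup_le_of_le_bellman hγ0 hγ1 (hQ.isPolicy_pullback hπ.1)
    (W := Q.value γ π ∘ Quotient.mk V.eqS) (fun s => hW _) (fun s a ha => ?_) (fun s => ?_)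
  · rw [backup_comp_mk hQ hW ⟨(s, a), ha⟩]
    exact backup_value_le_of_isOptimal hγ0 hγ1 hπ (hQ.mk_mem_adm _)
  · rw [bellman_pullback hQ hW, Function.comp_apply, ← value_eq_bellman hγ0 hγ1 hπ.1]

end MDP.VisibleSymmetry

theorem visibleSymmetry_pullback_optimal_general
    {S A Rw : Type*}
    (M : MDP S A Rw) (γ : ℝ) (hγ0 : 0 ≤ γ) (hγ1 : γ < 1)
    (V : M.VisibleSymmetry)
    (Q : MDP (Quotient V.eqS) (Quotient V.eqP) Rw)
    (hrval : Q.rval = M.rval)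
    (hadm : ∀ (q : M.Pairs) (X : Quotient V.eqS),
      Quotient.mk V.eqP q ∈ Q.adm X ↔ Quotient.mk V.eqS q.1.1 = X)
    (hp : ∀ (q : M.Pairs) (s' : S) (r : Rw),
      Q.p (Quotient.mk V.eqS s') r (Quotient.mk V.eqS q.1.1) (Quotient.mk V.eqP q) =
        ∑' x : {x : S // V.eqS.r x s'}, M.p x.1 r q.1.1 q.1.2)
    (π : Quotient V.eqS → Quotient V.eqP → ℝ) (hπ : Q.IsPolicy π)
    (π' : S → A → ℝ)
    (hπ'adm : ∀ (s : S) (a : A) (h : a ∈ M.adm s),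
      π' s a = π (Quotient.mk V.eqS s) (Quotient.mk V.eqP ⟨(s, a), h⟩) / (V.N s a h : ℝ))
    (hπ'nadm : ∀ (s : S) (a : A), a ∉ M.adm s → π' s a = 0) :
    M.IsPolicy π' ∧
      (Q.IsOptimal γ π → M.IsOptimal γ π') ∧
      (V.Simple → ∀ (s : S) (a : A) (h : a ∈ M.adm s),
        π' s a = π (Quotient.mk V.eqS s) (Quotient.mk V.eqP ⟨(s, a), h⟩)) := by
  have hQ : V.IsQuotient Q := ⟨hrval, hadm, hp⟩
  obtain rfl : π' = V.pullback π := by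
    funext s a
    by_cases h : a ∈ M.adm s
    · rw [hπ'adm s a h, MDP.VisibleSymmetry.pullback, dif_pos h]
    · rw [hπ'nadm s a h, MDP.VisibleSymmetry.pullback, dif_neg h]
  exact ⟨hQ.isPolicy_pullback hπ, hQ.isOptimal_pullback hγ0 hγ1,
    fun hV _ _ h => hV.pullback_eq π h⟩

/-- Let `M` be an MDP with discount factor `γ ∈ [0,1)` and `~` a visible
symmetry of `M` with quotient MDP `Q = M/~` (characterized by `hadm`, `hp`, `hrval`).
For a policy `π` in `M/~`, the pullback `π'(s,a) = π([(s,a)]_Ψ) / N_Ψ(s,a)` is a policy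
in `M`; if `π` is optimal in `M/~` then `π'` is optimal in `M`; and if `~` is simple
then `π'(s,a) = π([(s,a)] | [s])`. -/
theorem visibleSymmetry_pullback_optimal
    {S A Rw : Type*} [Countable S] [Countable Rw]
    (M : MDP S A Rw) (γ : ℝ) (hγ0 : 0 ≤ γ) (hγ1 : γ < 1)
    (V : M.VisibleSymmetry)
    (Q : MDP (Quotient V.eqS) (Quotient V.eqP) Rw)
    (hrval : Q.rval = M.rval)
    (hadm : ∀ (q : M.Pairs) (X : Quotient V.eqS),
      Quotient.mk V.eqP q ∈ Q.adm X ↔ Quotient.mk V.eqS q.1.1 = X)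
    (hp : ∀ (q : M.Pairs) (s' : S) (r : Rw),
      Q.p (Quotient.mk V.eqS s') r (Quotient.mk V.eqS q.1.1) (Quotient.mk V.eqP q) =
        ∑' x : {x : S // V.eqS.r x s'}, M.p x.1 r q.1.1 q.1.2)
    (π : Quotient V.eqS → Quotient V.eqP → ℝ) (hπ : Q.IsPolicy π)
    (π' : S → A → ℝ)
    (hπ'adm : ∀ (s : S) (a : A) (h : a ∈ M.adm s),
      π' s a = π (Quotient.mk V.eqS s) (Quotient.mk V.eqP ⟨(s, a), h⟩) / (V.N s a h : ℝ))
    (hπ'nadm : ∀ (s : S) (a : A), a ∉ M.adm s → π' s a = 0) :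
    M.IsPolicy π' ∧
      (Q.IsOptimal γ π → M.IsOptimal γ π') ∧
      (V.Simple → ∀ (s : S) (a : A) (h : a ∈ M.adm s),
        π' s a = π (Quotient.mk V.eqS s) (Quotient.mk V.eqP ⟨(s, a), h⟩)) :=
  visibleSymmetry_pullback_optimal_general M γ hγ0 hγ1 V Q hrval hadm hp π hπ π' hπ'adm hπ'nadm
end

section
/- Let M, M̃ and M' be MDPs with the same discount factor γ ∈ [0,1). Suppose M̃ is a relabeled variant of M via a relabeling h = (f, {g_s}_{s∈S}), and suppose M̃ and M' have the same transition structure and the same set of optimal policies, i.e. Π_*(M̃) = Π_*(M'). Then the map Π_*(M') → Π_*(M), π ↦ π∘h, where (π∘h)(a|s) := π(g_s(a) | f(s)), is bijective. -/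
namespace MDP

section Transfer

attribute [local instance] Classical.propDecidable Classical.decEq

variable {S A Rw S' A' : Type*} {M : MDP S A Rw} {Mt : MDP S' A' Rw}

/-- Reindexing a finite sum over admissible actions along the relabeling. -/
lemma Relabeling.sum_g (h : M.Relabeling Mt) (s : S) (F : A' → ℝ) :
    ∑ b ∈ Mt.adm (h.f s), F b = ∑ a ∈ M.adm s, F (h.g s a) := by
  refine (Finset.sum_bij (fun a _ => h.g s a) ?_ ?_ ?_ ?_).symm
  · intro a ha; exact (h.g_bij s).mapsTo ha
  · intro a1 ha1 a2 ha2 he; exact (h.g_bij s).injOn ha1 ha2 he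
  · intro b hb
    obtain ⟨a, ha, rfl⟩ := (h.g_bij s).surjOn hb
    exact ⟨a, ha, rfl⟩
  · intro a ha; rfl

lemma Relabeling.tsum_p (h : M.Relabeling Mt) (s : S) (a : A) (ha : a ∈ M.adm s) :
    (∑' x : S × Rw, M.p x.1 x.2 s a * M.rval x.2)
      = ∑' x : S' × Rw, Mt.p x.1 x.2 (h.f s) (h.g s a) * Mt.rval x.2 := by
  rw [← Equiv.tsum_eq ((Equiv.ofBijective h.f h.f_bij).prodCongr (Equiv.refl Rw))
    (fun x : S' × Rw => Mt.p x.1 x.2 (h.f s) (h.g s a) * Mt.rval x.2)]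
  refine tsum_congr fun x => ?_
  simp only [Equiv.prodCongr_apply, Equiv.coe_refl, Prod.map, Equiv.ofBijective_apply, id]
  rw [← h.dyn s a ha, h.rval_eq]

lemma Relabeling.stepReward_eq (h : M.Relabeling Mt)
    (pull : (S' → A' → ℝ) → (S → A → ℝ))
    (hpull_adm : ∀ (π : S' → A' → ℝ) (s : S) (a : A), a ∈ M.adm s →
      pull π s a = π (h.f s) (h.g s a))
    (π : S' → A' → ℝ) :
    ∀ (k : ℕ) (s : S), M.stepReward (pull π) k s = Mt.stepReward π k (h.f s) := by
  intro k
  induction k with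
  | zero =>
    intro s
    simp only [stepReward]
    rw [h.sum_g s (fun b => π (h.f s) b *
      ∑' x : S' × Rw, Mt.p x.1 x.2 (h.f s) b * Mt.rval x.2)]
    refine Finset.sum_congr rfl fun a ha => ?_
    rw [hpull_adm π s a ha, h.tsum_p s a ha]
  | succ k ih =>
    intro s
    simp only [stepReward]
    rw [h.sum_g s (fun b => π (h.f s) b *
      ∑' t : S', (∑' r : Rw, Mt.p t r (h.f s) b) * Mt.stepReward π k t)]
    refine Finset.sum_congr rfl fun a ha => ?_
    rw [hpull_adm π s a ha]
    congr 1
    rw [← Equiv.tsum_eq (Equiv.ofBijective h.f h.f_bij)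
      (fun t : S' => (∑' r : Rw, Mt.p t r (h.f s) (h.g s a)) * Mt.stepReward π k t)]
    refine tsum_congr fun s'' => ?_
    simp only [Equiv.ofBijective_apply]
    rw [ih s'']
    congr 1
    exact tsum_congr fun r => h.dyn s a ha s'' r

lemma Relabeling.value_eq (h : M.Relabeling Mt)
    (pull : (S' → A' → ℝ) → (S → A → ℝ))
    (hpull_adm : ∀ (π : S' → A' → ℝ) (s : S) (a : A), a ∈ M.adm s →
      pull π s a = π (h.f s) (h.g s a))
    (π : S' → A' → ℝ) (γ : ℝ) (s : S) :
    M.value γ (pull π) s = Mt.value γ π (h.f s) := by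
  unfold value
  exact tsum_congr fun k => by rw [h.stepReward_eq pull hpull_adm π k s]

/-- The pushforward of a policy along a relabeling. -/
noncomputable def Relabeling.push (h : M.Relabeling Mt) (ρ : S → A → ℝ) : S' → A' → ℝ :=
  fun t b =>
    ∑ a ∈ (M.adm ((Equiv.ofBijective h.f h.f_bij).symm t)).filter
        (fun a => h.g ((Equiv.ofBijective h.f h.f_bij).symm t) a = b),
      ρ ((Equiv.ofBijective h.f h.f_bij).symm t) a

lemma Relabeling.push_apply (h : M.Relabeling Mt) (ρ : S → A → ℝ) {s : S} {a : A}
    (ha : a ∈ M.adm s) : h.push ρ (h.f s) (h.g s a) = ρ s a := by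
  have hs : (Equiv.ofBijective h.f h.f_bij).symm (h.f s) = s :=
    (Equiv.ofBijective h.f h.f_bij).symm_apply_apply s
  unfold Relabeling.push
  rw [hs]
  have hfil : (M.adm s).filter (fun a' => h.g s a' = h.g s a) = {a} := by
    ext a'
    simp only [Finset.mem_filter, Finset.mem_singleton]
    constructor
    · rintro ⟨ha', he⟩; exact (h.g_bij s).injOn ha' ha he
    · rintro rfl; exact ⟨ha, rfl⟩
  rw [hfil, Finset.sum_singleton]

lemma Relabeling.push_nadm (h : M.Relabeling Mt) (ρ : S → A → ℝ) {t : S'} {b : A'}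
    (hb : b ∉ Mt.adm t) : h.push ρ t b = 0 := by
  set se := (Equiv.ofBijective h.f h.f_bij).symm t with hse
  have hts : h.f se = t := (Equiv.ofBijective h.f h.f_bij).apply_symm_apply t
  unfold Relabeling.push
  rw [← hse]
  have hfil : (M.adm se).filter (fun a => h.g se a = b) = ∅ := by
    refine Finset.filter_eq_empty_iff.mpr ?_
    intro a ha he
    exact hb (he ▸ hts ▸ (h.g_bij se).mapsTo ha)
  rw [hfil, Finset.sum_empty]

lemma Relabeling.push_policy (h : M.Relabeling Mt) (ρ : S → A → ℝ)
    (hρ : M.IsPolicy ρ) : Mt.IsPolicy (h.push ρ) := by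
  obtain ⟨h0, hn, h1⟩ := hρ
  refine ⟨fun t b => Finset.sum_nonneg fun a _ => h0 _ a, fun t b hb => h.push_nadm ρ hb, ?_⟩
  intro t
  set se := (Equiv.ofBijective h.f h.f_bij).symm t with hse
  have hts : h.f se = t := (Equiv.ofBijective h.f h.f_bij).apply_symm_apply t
  have hmap : ∀ a ∈ M.adm se, h.g se a ∈ Mt.adm t := fun a ha => hts ▸ (h.g_bij se).mapsTo ha
  calc ∑ b ∈ Mt.adm t, h.push ρ t b
      = ∑ b ∈ Mt.adm t, ∑ a ∈ (M.adm se).filter (fun a => h.g se a = b), ρ se a := rfl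
    _ = ∑ a ∈ M.adm se, ρ se a := Finset.sum_fiberwise_of_maps_to hmap _
    _ = 1 := h1 se

lemma Relabeling.pull_policy (h : M.Relabeling Mt)
    (pull : (S' → A' → ℝ) → (S → A → ℝ))
    (hpull_adm : ∀ (π : S' → A' → ℝ) (s : S) (a : A), a ∈ M.adm s →
      pull π s a = π (h.f s) (h.g s a))
    (hpull_nadm : ∀ (π : S' → A' → ℝ) (s : S) (a : A), a ∉ M.adm s →
      pull π s a = 0)
    (π : S' → A' → ℝ) (hπ : Mt.IsPolicy π) : M.IsPolicy (pull π) := by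
  obtain ⟨h0, hn, h1⟩ := hπ
  refine ⟨fun s a => ?_, fun s a ha => hpull_nadm π s a ha, fun s => ?_⟩
  · by_cases ha : a ∈ M.adm s
    · rw [hpull_adm π s a ha]; exact h0 _ _
    · rw [hpull_nadm π s a ha]
  · rw [Finset.sum_congr rfl fun a ha => hpull_adm π s a ha, ← h.sum_g s, h1]

lemma Relabeling.pull_push (h : M.Relabeling Mt)
    (pull : (S' → A' → ℝ) → (S → A → ℝ))
    (hpull_adm : ∀ (π : S' → A' → ℝ) (s : S) (a : A), a ∈ M.adm s →
      pull π s a = π (h.f s) (h.g s a))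
    (hpull_nadm : ∀ (π : S' → A' → ℝ) (s : S) (a : A), a ∉ M.adm s →
      pull π s a = 0)
    (ρ : S → A → ℝ) (hρ : M.IsPolicy ρ) : pull (h.push ρ) = ρ := by
  funext s a
  by_cases ha : a ∈ M.adm s
  · rw [hpull_adm _ s a ha, h.push_apply ρ ha]
  · rw [hpull_nadm _ s a ha, hρ.2.1 s a ha]

lemma Relabeling.optValue_eq (h : M.Relabeling Mt)
    (pull : (S' → A' → ℝ) → (S → A → ℝ))
    (hpull_adm : ∀ (π : S' → A' → ℝ) (s : S) (a : A), a ∈ M.adm s →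
      pull π s a = π (h.f s) (h.g s a))
    (hpull_nadm : ∀ (π : S' → A' → ℝ) (s : S) (a : A), a ∉ M.adm s →
      pull π s a = 0)
    (γ : ℝ) (s : S) : M.optValue γ s = Mt.optValue γ (h.f s) := by
  unfold optValue
  rw [iSup, iSup]
  congr 1
  ext x
  constructor
  · rintro ⟨⟨ρ, hρ⟩, rfl⟩
    refine ⟨⟨h.push ρ, h.push_policy ρ hρ⟩, ?_⟩
    dsimp only
    rw [← h.value_eq pull hpull_adm, h.pull_push pull hpull_adm hpull_nadm ρ hρ]
  · rintro ⟨⟨π, hπ⟩, rfl⟩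
    exact ⟨⟨pull π, h.pull_policy pull hpull_adm hpull_nadm π hπ⟩,
      h.value_eq pull hpull_adm π γ s⟩

end Transfer

end MDP

/-- Let `M`, `M̃`, `M'` be MDPs with the same discount factor `γ ∈ [0,1)`.
If `M̃` is a relabeled variant of `M` via the relabeling `h = (f, {g_s})`, and `M̃` and `M'`
have the same transition structure (same states, actions, admissible pairs and
state-transition function) and the same set of optimal policies, then the map
`π ↦ π ∘ h`, `(π ∘ h)(a|s) = π(g_s(a) | f(s))` on admissible pairs (and `0` elsewhere),
is a bijection from `Π_*(M')` to `Π_*(M)`. -/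
theorem relabeling_then_reward_shaping_optimal_policies_bijective
    {S A S' A' Rw Rw' : Type*} [Countable S] [Countable S'] [Countable Rw] [Countable Rw']
    (M : MDP S A Rw) (Mt : MDP S' A' Rw) (M' : MDP S' A' Rw')
    (γ : ℝ) (hγ0 : 0 ≤ γ) (hγ1 : γ < 1)
    (h : M.Relabeling Mt)
    (hadm : Mt.adm = M'.adm)
    (htrans : ∀ (s : S') (a : A'), a ∈ Mt.adm s → ∀ s' : S',
      (∑' r : Rw, Mt.p s' r s a) = ∑' r : Rw', M'.p s' r s a)
    (hopt : ∀ π : S' → A' → ℝ, Mt.IsOptimal γ π ↔ M'.IsOptimal γ π)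
    (pull : (S' → A' → ℝ) → (S → A → ℝ))
    (hpull_adm : ∀ (π : S' → A' → ℝ) (s : S) (a : A), a ∈ M.adm s →
      pull π s a = π (h.f s) (h.g s a))
    (hpull_nadm : ∀ (π : S' → A' → ℝ) (s : S) (a : A), a ∉ M.adm s →
      pull π s a = 0) :
    Set.BijOn pull {π | M'.IsOptimal γ π} {π | M.IsOptimal γ π} := by
  have hkey : ∀ π : S' → A' → ℝ, Mt.IsPolicy π →
      (M.IsOptimal γ (pull π) ↔ Mt.IsOptimal γ π) := by
    intro π hπ
    constructor
    · rintro ⟨-, hv⟩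
      refine ⟨hπ, fun t => ?_⟩
      obtain ⟨s, rfl⟩ := h.f_bij.surjective t
      rw [← h.value_eq pull hpull_adm π γ s, hv s,
        h.optValue_eq pull hpull_adm hpull_nadm γ s]
    · rintro ⟨-, hv⟩
      refine ⟨h.pull_policy pull hpull_adm hpull_nadm π hπ, fun s => ?_⟩
      rw [h.value_eq pull hpull_adm π γ s, hv (h.f s),
        h.optValue_eq pull hpull_adm hpull_nadm γ s]
  refine ⟨?_, ?_, ?_⟩
  · intro π hπ
    have hπt : Mt.IsOptimal γ π := (hopt π).mpr hπ
    exact (hkey π hπt.1).mpr hπt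
  · intro π1 h1 π2 h2 he
    have hp1 : Mt.IsPolicy π1 := ((hopt π1).mpr h1).1
    have hp2 : Mt.IsPolicy π2 := ((hopt π2).mpr h2).1
    funext t b
    by_cases hb : b ∈ Mt.adm t
    · obtain ⟨s, rfl⟩ := h.f_bij.surjective t
      obtain ⟨a, ha, rfl⟩ := (h.g_bij s).surjOn hb
      have ha' : a ∈ M.adm s := ha
      calc π1 (h.f s) (h.g s a) = pull π1 s a := (hpull_adm π1 s a ha').symm
        _ = pull π2 s a := by rw [he]
        _ = π2 (h.f s) (h.g s a) := hpull_adm π2 s a ha'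
    · rw [hp1.2.1 t b hb, hp2.2.1 t b hb]
  · intro ρ hρ
    have hρo : M.IsOptimal γ ρ := hρ
    have hpp : Mt.IsPolicy (h.push ρ) := h.push_policy ρ hρo.1
    have hpe : pull (h.push ρ) = ρ :=
      h.pull_push pull hpull_adm hpull_nadm ρ hρo.1
    refine ⟨h.push ρ, ?_, hpe⟩
    exact (hopt _).mp ((hkey _ hpp).mp (by rw [hpe]; exact hρo))
end

section
/- The dynamic of the transformed newsvendor MDP M'' is shift-invariant in the day index: for all t, l, k ∈ ℕ, every a' ∈ Z_δ and every r ∈ ℝ, p''(s_l, r | s_t, a') = p''(s_{l+k}, r | s_{t+k}, a'). -/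
/-- The reward of ordering `a` newspapers on day `t` under deviation `d`:
`Rew_t(a,d) = min(F_t + d, a)·C_s − a·C_p`. -/
noncomputable def Rew (F : ℕ → ℕ) (Cs Cp : ℝ) (t : ℕ) (a d : ℤ) : ℝ :=
  ((min ((F t : ℤ) + d) a : ℤ) : ℝ) * Cs - (a : ℝ) * Cp

/-- The expected reward `E(t,a) = ∑_{d ∈ Z_δ} μ(d)·Rew_t(a,d)`. -/
noncomputable def Erw (F : ℕ → ℕ) (Z : Finset ℤ) (μ : ℤ → ℝ) (Cs Cp : ℝ)
    (t : ℕ) (a : ℤ) : ℝ :=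
  ∑ d ∈ Z, μ d * Rew F Cs Cp t a d

/-- The admissible orders on day `t`: the set `F_t + Z_δ`. -/
def Acts (F : ℕ → ℕ) (Z : Finset ℤ) (t : ℕ) : Finset ℤ :=
  Z.image (fun d => (F t : ℤ) + d)

attribute [local instance] Classical.propDecidable

/-- The dynamic `p''` of the transformed newsvendor MDP `M''`:
`p''(s_l, r | s_t, a') = ∑_{d ∈ D'(r,t,a'+F_t)} μ(d)` if `l = t+1`, and `0` otherwise,
where `D'(r,t,a) = {d ∈ Z_δ : r = Rew_t(a,d) − Rew_t(F_t,d)}`. -/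
noncomputable def pTrans (F : ℕ → ℕ) (Z : Finset ℤ) (μ : ℤ → ℝ) (Cs Cp : ℝ)
    (l : ℕ) (r : ℝ) (t : ℕ) (a' : ℤ) : ℝ :=
  if l = t + 1 then
    ∑ d ∈ Z, if r = Rew F Cs Cp t (a' + (F t : ℤ)) d - Rew F Cs Cp t (F t : ℤ) d
      then μ d else 0
  else 0

/-- The dynamic of the transformed newsvendor MDP `M''` is
shift-invariant in the day index: `p''(s_l, r | s_t, a') = p''(s_{l+k}, r | s_{t+k}, a')`
for all `t, l, k ∈ ℕ`, `a' ∈ Z_δ`, `r ∈ ℝ`. -/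
theorem newsvendor_transformed_dynamic_shift_invariant
    (F : ℕ → ℕ) (Z : Finset ℤ) (hZ0 : (0 : ℤ) ∈ Z)
    (μ : ℤ → ℝ) (hμ0 : ∀ d ∈ Z, 0 ≤ μ d) (hμ1 : ∑ d ∈ Z, μ d = 1)
    (Cp Cs : ℝ) (hCp : 0 < Cp) (hCpCs : Cp < Cs)
    (t l k : ℕ) (a' : ℤ) (ha' : a' ∈ Z) (r : ℝ) :
    pTrans F Z μ Cs Cp l r t a' = pTrans F Z μ Cs Cp (l + k) r (t + k) a' := by
  have key : ∀ t, ∀ d : ℤ, Rew F Cs Cp t (a' + (F t : ℤ)) d - Rew F Cs Cp t (F t : ℤ) d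
      = ((min d a' : ℤ) : ℝ) * Cs - ((min d 0 : ℤ) : ℝ) * Cs - (a' : ℝ) * Cp := by
    intro t d
    simp only [Rew]
    have h1 : min ((F t : ℤ) + d) (a' + (F t : ℤ)) = (F t : ℤ) + min d a' := by omega
    have h2 : min ((F t : ℤ) + d) ((F t : ℤ)) = (F t : ℤ) + min d 0 := by omega
    rw [h1, h2]
    push_cast [Int.cast_min]
    ring
  simp only [pTrans]
  have hiff : l = t + 1 ↔ l + k = t + k + 1 := by omega
  by_cases h : l = t + 1
  · rw [if_pos h, if_pos (hiff.mp h)]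
    exact Finset.sum_congr rfl fun d _ => by rw [key t d, key (t+k) d]
  · rw [if_neg h, if_neg (fun hh => h (hiff.mpr hh))]
end

section
/- Define on the transformed newsvendor MDP M'' the relations ~_S := all pairs of states (every s_t ~_S s_l) and ~_{Ψ'} := {((s_t, a1), (s_l, a2)) : a1 = a2} on state-action pairs. Then (~_S, ~_{Ψ'}) is a simple visible symmetry of M'': both relations are equivalence relations; for every (s_t, a') and every s_l there is an action (namely a' itself) with (s_t,a') ~_{Ψ'} (s_l,a'); and for all t, l ∈ ℕ, a' ∈ Z_δ and r ∈ ℝ, ∑_{s̃} p''(s̃, r | s_t, a') = ∑_{s̃} p''(s̃, r | s_l, a') (the sum over the single ~_S-class of all states). -/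
attribute [local instance] Classical.propDecidable

lemma rew_diff (F : ℕ → ℕ) (Cs Cp : ℝ) (t : ℕ) (a' d : ℤ) :
    Rew F Cs Cp t (a' + (F t : ℤ)) d - Rew F Cs Cp t (F t : ℤ) d =
      ((min d a' - min d 0 : ℤ) : ℝ) * Cs - (a' : ℝ) * Cp := by
  unfold Rew
  have h1 : min ((F t : ℤ) + d) (a' + (F t : ℤ)) = (F t : ℤ) + min d a' := by
    rw [add_comm a' (F t : ℤ), min_add_add_left]
  have h2 : min ((F t : ℤ) + d) ((F t : ℤ)) = (F t : ℤ) + min d 0 := by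
    nth_rewrite 2 [show ((F t : ℤ)) = (F t : ℤ) + 0 by ring]
    rw [min_add_add_left]
  rw [h1, h2]
  push_cast
  ring

lemma pTrans_tsum (F : ℕ → ℕ) (Z : Finset ℤ) (μ : ℤ → ℝ) (Cs Cp : ℝ)
    (r : ℝ) (t : ℕ) (a' : ℤ) :
    (∑' sl : ℕ, pTrans F Z μ Cs Cp sl r t a') =
      ∑ d ∈ Z, if r = ((min d a' - min d 0 : ℤ) : ℝ) * Cs - (a' : ℝ) * Cp
        then μ d else 0 := by
  rw [tsum_eq_single (t + 1) (by intro b hb; simp [pTrans, hb])]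
  simp only [pTrans, if_pos rfl]
  exact Finset.sum_congr rfl fun d _ => by rw [rew_diff]

/-- On the transformed newsvendor MDP `M''` (states `s_t` indexed by
`t : ℕ`, admissible actions `Z_δ` in every state), the relation relating all states and
the relation relating state-action pairs with the same action form a simple visible
symmetry: both relations are equivalence relations; every action `a' ∈ Z_δ` of a state
can be lifted to any other state (namely to `a'` itself); related pairs have the same
class-sum dynamic, where the single `~_S`-class is all of `ℕ`; and related pairs carry
the same action. -/
theorem newsvendor_transformed_simple_visible_symmetry
    (F : ℕ → ℕ) (Z : Finset ℤ) (hZ0 : (0 : ℤ) ∈ Z)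
    (μ : ℤ → ℝ) (hμ0 : ∀ d ∈ Z, 0 ≤ μ d) (hμ1 : ∑ d ∈ Z, μ d = 1)
    (Cp Cs : ℝ) (hCp : 0 < Cp) (hCpCs : Cp < Cs) :
    Equivalence (fun (_ _ : ℕ) => True) ∧
    Equivalence (fun (q1 q2 : ℕ × ℤ) => q1.2 = q2.2) ∧
    (∀ (t : ℕ) (a' : ℤ), a' ∈ Z → ∀ l : ℕ,
      ∃ a2 ∈ Z, (((t, a') : ℕ × ℤ)).2 = (((l, a2) : ℕ × ℤ)).2) ∧
    (∀ (t l : ℕ) (a' : ℤ), a' ∈ Z → ∀ r : ℝ,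
      (∑' sl : ℕ, pTrans F Z μ Cs Cp sl r t a') =
        ∑' sl : ℕ, pTrans F Z μ Cs Cp sl r l a') ∧
    (∀ q1 q2 : ℕ × ℤ, q1.2 = q2.2 → q1.2 = q2.2) := by
  refine ⟨⟨fun _ => trivial, fun _ => trivial, fun _ _ => trivial⟩,
    ⟨fun _ => rfl, fun h => h.symm, fun h1 h2 => h1.trans h2⟩,
    fun t a' ha l => ⟨a', ha, rfl⟩,
    fun t l a' _ r => by rw [pTrans_tsum, pTrans_tsum],
    fun _ _ h => h⟩
end

section
/- The multi-period newsvendor MDP has no nontrivial visible symmetries unless the forecast sequence is eventually repeating: assume μ(d) > 0 for every d ∈ Z_δ, and let ~ = (~_S, ~_Ψ) be a visible symmetry of the newsvendor MDP M. If s_t ~_S s_l for some t, l ∈ ℕ, then F_{t+k} = F_{l+k} for all k ∈ ℕ (and in particular F_t = F_l). Consequently, if for all t ≠ l there exists k ∈ ℕ with F_{t+k} ≠ F_{l+k}, then s_t ~_S s_l implies t = l, i.e. ~_S is the trivial (identity) relation on states. -/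
attribute [local instance] Classical.propDecidable

/-- The dynamic of the newsvendor MDP `M`:
`p(s_l, r | s_t, a) = ∑_{d ∈ Z_δ, Rew_t(a,d) = r} μ(d)` if `l = t+1`, and `0` otherwise. -/
noncomputable def pNews (F : ℕ → ℕ) (Z : Finset ℤ) (μ : ℤ → ℝ) (Cs Cp : ℝ)
    (l : ℕ) (r : ℝ) (t : ℕ) (a : ℤ) : ℝ :=
  if l = t + 1 then ∑ d ∈ Z, if Rew F Cs Cp t a d = r then μ d else 0 else 0

/-- mass positivity -/
lemma mass_pos {Z : Finset ℤ} {μ : ℤ → ℝ} (hμ0 : ∀ d ∈ Z, 0 ≤ μ d)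
    {f : ℤ → ℝ} {r : ℝ} {d0 : ℤ} (hd0 : d0 ∈ Z) (hpos : 0 < μ d0) (hf : f d0 = r) :
    0 < ∑ d ∈ Z, if f d = r then μ d else 0 := by
  refine Finset.sum_pos' (fun d hd => ?_) ⟨d0, hd0, by simp [hf, hpos]⟩
  split
  · exact hμ0 d hd
  · exact le_refl 0

lemma exists_of_mass_pos {Z : Finset ℤ} {μ : ℤ → ℝ}
    {f : ℤ → ℝ} {r : ℝ} (h : 0 < ∑ d ∈ Z, if f d = r then μ d else 0) :
    ∃ d ∈ Z, f d = r := by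
  by_contra hcon
  push_neg at hcon
  have : (∑ d ∈ Z, if f d = r then μ d else 0) = 0 :=
    Finset.sum_eq_zero fun d hd => by simp [hcon d hd]
  rw [this] at h; exact lt_irrefl 0 h

lemma exp_fiber (Z : Finset ℤ) (μ : ℤ → ℝ) (f : ℤ → ℝ) (S : Finset ℝ)
    (hf : ∀ d ∈ Z, f d ∈ S) :
    ∑ d ∈ Z, μ d * f d = ∑ r ∈ S, r * ∑ d ∈ Z, (if f d = r then μ d else 0) := by
  have h1 : ∀ r ∈ S, r * (∑ d ∈ Z, if f d = r then μ d else 0)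
      = ∑ d ∈ Z, (if f d = r then r * μ d else 0) := by
    intro r _
    rw [Finset.mul_sum]
    exact Finset.sum_congr rfl fun d _ => by rw [mul_ite, mul_zero]
  rw [Finset.sum_congr rfl h1, Finset.sum_comm]
  refine Finset.sum_congr rfl fun d hd => ?_
  rw [Finset.sum_eq_single_of_mem (f d) (hf d hd)
    (fun r _ hr => if_neg fun h => hr h.symm)]
  simp [mul_comm]

lemma exp_eq (Z : Finset ℤ) (μ : ℤ → ℝ) (f g : ℤ → ℝ)
    (h : ∀ r : ℝ, (∑ d ∈ Z, if f d = r then μ d else 0)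
        = ∑ d ∈ Z, if g d = r then μ d else 0) :
    ∑ d ∈ Z, μ d * f d = ∑ d ∈ Z, μ d * g d := by
  rw [exp_fiber Z μ f (Z.image f ∪ Z.image g)
      (fun d hd => Finset.mem_union_left _ (Finset.mem_image_of_mem f hd)),
    exp_fiber Z μ g (Z.image f ∪ Z.image g)
      (fun d hd => Finset.mem_union_right _ (Finset.mem_image_of_mem g hd))]
  exact Finset.sum_congr rfl fun r _ => by rw [h r]

lemma key_step (F : ℕ → ℕ) (Z : Finset ℤ) (hZ0 : (0 : ℤ) ∈ Z)
    (μ : ℤ → ℝ) (hμ0 : ∀ d ∈ Z, 0 ≤ μ d) (hμ1 : ∑ d ∈ Z, μ d = 1)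
    (hμpos : ∀ d ∈ Z, 0 < μ d)
    (Cp Cs : ℝ) (hCp : 0 < Cp) (hCpCs : Cp < Cs)
    (eqS : ℕ → ℕ → Prop)
    (eqP : {q : ℕ × ℤ // q.2 ∈ Acts F Z q.1} → {q : ℕ × ℤ // q.2 ∈ Acts F Z q.1} → Prop)
    (heqS : Equivalence eqS)
    (hlift : ∀ (q : {q : ℕ × ℤ // q.2 ∈ Acts F Z q.1}) (l : ℕ), eqS q.1.1 l →
      ∃ (a2 : ℤ) (h2 : a2 ∈ Acts F Z l), eqP q ⟨(l, a2), h2⟩)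
    (hdyn : ∀ q1 q2 : {q : ℕ × ℤ // q.2 ∈ Acts F Z q.1}, eqP q1 q2 →
      ∀ (s' : ℕ) (r : ℝ),
        (∑' x : {x : ℕ // eqS x s'}, pNews F Z μ Cs Cp x.1 r q1.1.1 q1.1.2) =
          ∑' x : {x : ℕ // eqS x s'}, pNews F Z μ Cs Cp x.1 r q2.1.1 q2.1.2)
    {t l : ℕ} (hS : eqS t l) : F t = F l ∧ eqS (t + 1) (l + 1) := by
  have h1 : ((F t : ℤ)) ∈ Acts F Z t := Finset.mem_image.2 ⟨0, hZ0, by ring⟩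
  obtain ⟨a2, h2, hP⟩ := hlift ⟨(t, (F t : ℤ)), h1⟩ l hS
  obtain ⟨e, heZ, hae⟩ := Finset.mem_image.1 h2
  have hae : (F l : ℤ) + e = a2 := hae
  set f : ℤ → ℝ := fun d => Rew F Cs Cp t (F t : ℤ) d with hfdef
  set g : ℤ → ℝ := fun d => Rew F Cs Cp l a2 d with hgdef
  have hEq : ∀ r : ℝ,
      (∑' x : {x : ℕ // eqS x (t+1)}, pNews F Z μ Cs Cp x.1 r t (F t : ℤ)) =
        ∑' x : {x : ℕ // eqS x (t+1)}, pNews F Z μ Cs Cp x.1 r l a2 :=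
    fun r => hdyn ⟨(t, (F t : ℤ)), h1⟩ ⟨(l, a2), h2⟩ hP (t+1) r
  have hL : ∀ r : ℝ,
      (∑' x : {x : ℕ // eqS x (t+1)}, pNews F Z μ Cs Cp x.1 r t (F t : ℤ)) =
        ∑ d ∈ Z, if f d = r then μ d else 0 := by
    intro r
    rw [tsum_eq_single (⟨t+1, heqS.refl _⟩ : {x : ℕ // eqS x (t+1)})
      (fun b hb => by
        have hb1 : b.1 ≠ t + 1 := fun h => hb (Subtype.ext h)
        simp [pNews, hb1])]
    simp [pNews, hfdef]
  -- step 1 : eqS (l+1) (t+1)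
  have hS1 : eqS (l + 1) (t + 1) := by
    by_contra hcon
    have hz : (∑' x : {x : ℕ // eqS x (t+1)}, pNews F Z μ Cs Cp x.1 (f 0) l a2) = 0 := by
      have hall : ∀ x : {x : ℕ // eqS x (t+1)}, pNews F Z μ Cs Cp x.1 (f 0) l a2 = 0 := by
        intro x
        have hx1 : x.1 ≠ l + 1 := fun h => hcon (h ▸ x.2)
        simp [pNews, hx1]
      rw [tsum_congr hall, tsum_zero]
    have hpos0 : 0 < ∑ d ∈ Z, if f d = f 0 then μ d else 0 :=
      mass_pos hμ0 hZ0 (hμpos 0 hZ0) rfl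
    have : (∑ d ∈ Z, if f d = f 0 then μ d else 0) = 0 := by
      rw [← hL (f 0), hEq (f 0), hz]
    rw [this] at hpos0; exact lt_irrefl 0 hpos0
  have hR : ∀ r : ℝ,
      (∑' x : {x : ℕ // eqS x (t+1)}, pNews F Z μ Cs Cp x.1 r l a2) =
        ∑ d ∈ Z, if g d = r then μ d else 0 := by
    intro r
    rw [tsum_eq_single (⟨l+1, hS1⟩ : {x : ℕ // eqS x (t+1)})
      (fun b hb => by
        have hb1 : b.1 ≠ l + 1 := fun h => hb (Subtype.ext h)
        simp [pNews, hb1])]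
    simp [pNews, hgdef]
  have hmass : ∀ r : ℝ, (∑ d ∈ Z, if f d = r then μ d else 0)
      = ∑ d ∈ Z, if g d = r then μ d else 0 := by
    intro r; rw [← hL r, ← hR r]; exact hEq r
  -- step 2 : a2 = F t  (max reward analysis)
  have hfle : ∀ d : ℤ, f d ≤ (F t : ℝ) * Cs - (F t : ℝ) * Cp := by
    intro d
    have hm : ((min ((F t : ℤ) + d) (F t : ℤ) : ℤ) : ℝ) ≤ ((F t : ℤ) : ℝ) := by
      exact_mod_cast min_le_right ((F t : ℤ) + d) (F t : ℤ)
    simp only [hfdef, Rew]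
    have := mul_le_mul_of_nonneg_right hm (le_of_lt (lt_trans hCp hCpCs))
    push_cast at this ⊢
    linarith
  have hgle : ∀ d : ℤ, g d ≤ (a2 : ℝ) * Cs - (a2 : ℝ) * Cp := by
    intro d
    have hm : ((min ((F l : ℤ) + d) a2 : ℤ) : ℝ) ≤ (a2 : ℝ) := by
      exact_mod_cast min_le_right ((F l : ℤ) + d) a2
    simp only [hgdef, Rew]
    have := mul_le_mul_of_nonneg_right hm (le_of_lt (lt_trans hCp hCpCs))
    linarith
  have hf0 : f 0 = (F t : ℝ) * Cs - (F t : ℝ) * Cp := by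
    simp [hfdef, Rew]
  have hge : g e = (a2 : ℝ) * Cs - (a2 : ℝ) * Cp := by
    simp only [hgdef, Rew]
    rw [hae]
    simp
  have hgr1 : ∃ d ∈ Z, g d = (F t : ℝ) * Cs - (F t : ℝ) * Cp := by
    apply exists_of_mass_pos (μ := μ)
    rw [← hmass]
    exact mass_pos hμ0 hZ0 (hμpos 0 hZ0) hf0
  have hfr2 : ∃ d ∈ Z, f d = (a2 : ℝ) * Cs - (a2 : ℝ) * Cp := by
    apply exists_of_mass_pos (μ := μ)
    rw [hmass]
    exact mass_pos hμ0 heZ (hμpos e heZ) hge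
  obtain ⟨d1, _, hd1⟩ := hgr1
  obtain ⟨d2, _, hd2⟩ := hfr2
  have hle1 : (F t : ℝ) * Cs - (F t : ℝ) * Cp ≤ (a2 : ℝ) * Cs - (a2 : ℝ) * Cp := by
    rw [← hd1]; exact hgle d1
  have hle2 : (a2 : ℝ) * Cs - (a2 : ℝ) * Cp ≤ (F t : ℝ) * Cs - (F t : ℝ) * Cp := by
    rw [← hd2]; exact hfle d2
  have hcast : ((F t : ℤ) : ℝ) = (a2 : ℝ) := by
    push_cast
    nlinarith [hle1, hle2]
  have ha2 : a2 = (F t : ℤ) := by exact_mod_cast hcast.symm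
  have hFe : (F t : ℤ) = (F l : ℤ) + e := by omega
  -- step 3 : expectations
  have hexp : ∑ d ∈ Z, μ d * f d = ∑ d ∈ Z, μ d * g d := exp_eq Z μ f g hmass
  have hfg : ∀ d : ℤ, f d - g d = ((e + min d 0 - min d e : ℤ) : ℝ) * Cs := by
    intro d
    have hm : min ((F t : ℤ) + d) (F t : ℤ) - min ((F l : ℤ) + d) (F t : ℤ)
        = e + min d 0 - min d e := by omega
    have hc : ((min ((F t : ℤ) + d) (F t : ℤ) : ℤ) : ℝ)
        - ((min ((F l : ℤ) + d) (F t : ℤ) : ℤ) : ℝ)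
        = ((e + min d 0 - min d e : ℤ) : ℝ) := by exact_mod_cast congrArg (Int.cast : ℤ → ℝ) hm
    simp only [hfdef, hgdef, Rew, ha2]
    linear_combination Cs * hc
  have hψ0 : ∑ d ∈ Z, μ d * ((e + min d 0 - min d e : ℤ) : ℝ) = 0 := by
    have h0 : (∑ d ∈ Z, μ d * ((e + min d 0 - min d e : ℤ) : ℝ)) * Cs = 0 := by
      rw [Finset.sum_mul]
      have hcongr : ∀ d ∈ Z, μ d * ((e + min d 0 - min d e : ℤ) : ℝ) * Cs
          = μ d * f d - μ d * g d := by
        intro d _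
        rw [mul_assoc, ← hfg d]; ring
      rw [Finset.sum_congr rfl hcongr, Finset.sum_sub_distrib, hexp, sub_self]
    rcases mul_eq_zero.1 h0 with h | h
    · exact h
    · exfalso; linarith
  have he0 : e = 0 := by
    rcases lt_trichotomy e 0 with he' | he' | he'
    · exfalso
      have hlt : ∑ d ∈ Z, μ d * ((e + min d 0 - min d e : ℤ) : ℝ) < ∑ _d ∈ Z, (0 : ℝ) := by
        refine Finset.sum_lt_sum (fun d hd => ?_) ⟨e, heZ, ?_⟩
        · have hψ : (e + min d 0 - min d e : ℤ) ≤ 0 := by omega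
          have : ((e + min d 0 - min d e : ℤ) : ℝ) ≤ 0 := by exact_mod_cast hψ
          exact mul_nonpos_iff.2 (Or.inl ⟨hμ0 d hd, this⟩)
        · have hψ : (e + min e 0 - min e e : ℤ) < 0 := by omega
          have : ((e + min e 0 - min e e : ℤ) : ℝ) < 0 := by exact_mod_cast hψ
          exact mul_neg_of_pos_of_neg (hμpos e heZ) this
      rw [Finset.sum_const_zero, hψ0] at hlt
      exact lt_irrefl 0 hlt
    · exact he'
    · exfalso
      have hlt : (∑ _d ∈ Z, (0 : ℝ)) < ∑ d ∈ Z, μ d * ((e + min d 0 - min d e : ℤ) : ℝ) := by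
        refine Finset.sum_lt_sum (fun d hd => ?_) ⟨0, hZ0, ?_⟩
        · have hψ : (0 : ℤ) ≤ e + min d 0 - min d e := by omega
          have : (0 : ℝ) ≤ ((e + min d 0 - min d e : ℤ) : ℝ) := by exact_mod_cast hψ
          exact mul_nonneg (hμ0 d hd) this
        · have hψ : (0 : ℤ) < e + min 0 0 - min 0 e := by omega
          have : (0 : ℝ) < ((e + min 0 0 - min 0 e : ℤ) : ℝ) := by exact_mod_cast hψ
          exact mul_pos (hμpos 0 hZ0) this
      rw [Finset.sum_const_zero, hψ0] at hlt
      exact lt_irrefl 0 hlt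
  refine ⟨?_, heqS.symm hS1⟩
  omega



/-- Assume `μ(d) > 0` for every `d ∈ Z_δ` and let `~ = (~_S, ~_Ψ)` be a
visible symmetry of the newsvendor MDP `M` (states `t : ℕ`, admissible actions
`F_t + Z_δ`, dynamic `pNews`).  If `s_t ~_S s_l` then `F_{t+k} = F_{l+k}` for all `k`
(in particular `F_t = F_l`); consequently, if for all `t ≠ l` there is `k` with
`F_{t+k} ≠ F_{l+k}`, then `~_S` is the identity relation on states. -/
theorem newsvendor_no_visible_symmetries
    (F : ℕ → ℕ) (Z : Finset ℤ) (hZ0 : (0 : ℤ) ∈ Z)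
    (μ : ℤ → ℝ) (hμ0 : ∀ d ∈ Z, 0 ≤ μ d) (hμ1 : ∑ d ∈ Z, μ d = 1)
    (hμpos : ∀ d ∈ Z, 0 < μ d)
    (Cp Cs : ℝ) (hCp : 0 < Cp) (hCpCs : Cp < Cs)
    (eqS : ℕ → ℕ → Prop)
    (eqP : {q : ℕ × ℤ // q.2 ∈ Acts F Z q.1} → {q : ℕ × ℤ // q.2 ∈ Acts F Z q.1} → Prop)
    (heqS : Equivalence eqS) (heqP : Equivalence eqP)
    (hlift : ∀ (q : {q : ℕ × ℤ // q.2 ∈ Acts F Z q.1}) (l : ℕ), eqS q.1.1 l →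
      ∃ (a2 : ℤ) (h2 : a2 ∈ Acts F Z l), eqP q ⟨(l, a2), h2⟩)
    (hrel : ∀ q1 q2 : {q : ℕ × ℤ // q.2 ∈ Acts F Z q.1}, eqP q1 q2 → eqS q1.1.1 q2.1.1)
    (hdyn : ∀ q1 q2 : {q : ℕ × ℤ // q.2 ∈ Acts F Z q.1}, eqP q1 q2 →
      ∀ (s' : ℕ) (r : ℝ),
        (∑' x : {x : ℕ // eqS x s'}, pNews F Z μ Cs Cp x.1 r q1.1.1 q1.1.2) =
          ∑' x : {x : ℕ // eqS x s'}, pNews F Z μ Cs Cp x.1 r q2.1.1 q2.1.2) :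
    (∀ t l : ℕ, eqS t l → ∀ k : ℕ, F (t + k) = F (l + k)) ∧
      ((∀ t l : ℕ, t ≠ l → ∃ k : ℕ, F (t + k) ≠ F (l + k)) →
        ∀ t l : ℕ, eqS t l → t = l) := by
  have key := fun {t l : ℕ} (h : eqS t l) =>
    key_step F Z hZ0 μ hμ0 hμ1 hμpos Cp Cs hCp hCpCs eqS eqP heqS hlift hdyn h
  have hiter : ∀ t l : ℕ, eqS t l → ∀ k : ℕ, eqS (t + k) (l + k) := by
    intro t l h k
    induction k with
    | zero => simpa using h
    | succ n ih =>
      have := (key ih).2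
      have ht : t + (n + 1) = t + n + 1 := by omega
      have hl : l + (n + 1) = l + n + 1 := by omega
      rw [ht, hl]
      exact this
  have part1 : ∀ t l : ℕ, eqS t l → ∀ k : ℕ, F (t + k) = F (l + k) :=
    fun t l h k => (key (hiter t l h k)).1
  refine ⟨part1, ?_⟩
  intro hyp t l h
  by_contra hne
  obtain ⟨k, hk⟩ := hyp t l hne
  exact hk (part1 t l h k)
end

section
/- Reduction of the multi-period newsvendor problem to a single multi-armed bandit: for every t ∈ ℕ and every a' ∈ Z_δ, E(t, F_t + a') − E(t, F_t) = G(a'), where G(a') := ∑_{d∈Z_δ} μ(d)·((min(d, a') − min(d, 0))·C_s − a'·C_p). Consequently, for every t ∈ ℕ, the set of maximizers of E(t, ·) over F_t + Z_δ equals F_t + (set of maximizers of G over Z_δ); in particular, n* ∈ Z_δ maximizes G over Z_δ if and only if for every day t the order a_t := F_t + n* maximizes the expected reward E(t, ·) over F_t + Z_δ. -/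
/-- The reward function of the one-state quotient MDP (a single multi-armed bandit):
`G(a') = ∑_{d ∈ Z_δ} μ(d)·((min(d,a') − min(d,0))·C_s − a'·C_p)`. -/
noncomputable def Gban (Z : Finset ℤ) (μ : ℤ → ℝ) (Cs Cp : ℝ) (a' : ℤ) : ℝ :=
  ∑ d ∈ Z, μ d * (((min d a' - min d 0 : ℤ) : ℝ) * Cs - (a' : ℝ) * Cp)

/-- Reduction of the multi-period newsvendor problem to a single
multi-armed bandit: `E(t, F_t + a') − E(t, F_t) = G(a')` for every day `t` and every
`a' ∈ Z_δ`; consequently the maximizers of `E(t,·)` over `F_t + Z_δ` are exactly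
`F_t +` (the maximizers of `G` over `Z_δ`); in particular `n* ∈ Z_δ` maximizes `G` over
`Z_δ` iff for every day `t` the order `F_t + n*` maximizes `E(t,·)` over `F_t + Z_δ`. -/
theorem newsvendor_reduction_to_bandit
    (F : ℕ → ℕ) (Z : Finset ℤ) (hZ0 : (0 : ℤ) ∈ Z)
    (μ : ℤ → ℝ) (hμ0 : ∀ d ∈ Z, 0 ≤ μ d) (hμ1 : ∑ d ∈ Z, μ d = 1)
    (Cp Cs : ℝ) (hCp : 0 < Cp) (hCpCs : Cp < Cs) :
    (∀ (t : ℕ) (a' : ℤ), a' ∈ Z →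
      Erw F Z μ Cs Cp t ((F t : ℤ) + a') - Erw F Z μ Cs Cp t (F t : ℤ) =
        Gban Z μ Cs Cp a') ∧
    (∀ t : ℕ,
      {a : ℤ | a ∈ Acts F Z t ∧ ∀ b ∈ Acts F Z t, Erw F Z μ Cs Cp t b ≤ Erw F Z μ Cs Cp t a} =
        (fun n => (F t : ℤ) + n) ''
          {n : ℤ | n ∈ Z ∧ ∀ m ∈ Z, Gban Z μ Cs Cp m ≤ Gban Z μ Cs Cp n}) ∧
    (∀ nstar ∈ Z,
      ((∀ m ∈ Z, Gban Z μ Cs Cp m ≤ Gban Z μ Cs Cp nstar) ↔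
        ∀ (t : ℕ), ∀ b ∈ Acts F Z t,
          Erw F Z μ Cs Cp t b ≤ Erw F Z μ Cs Cp t ((F t : ℤ) + nstar))) := by
  have key : ∀ (t : ℕ) (a' : ℤ),
      Erw F Z μ Cs Cp t ((F t : ℤ) + a') - Erw F Z μ Cs Cp t (F t : ℤ) =
        Gban Z μ Cs Cp a' := by
    intro t a'
    unfold Erw Gban Rew
    rw [← Finset.sum_sub_distrib]
    apply Finset.sum_congr rfl
    intro d _
    have h1 : min ((F t : ℤ) + d) ((F t : ℤ) + a') = (F t : ℤ) + min d a' :=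
      min_add_add_left _ _ _
    have h2 : min ((F t : ℤ) + d) ((F t : ℤ)) = (F t : ℤ) + min d 0 := by
      rw [← min_add_add_left]; simp
    rw [h1, h2]
    push_cast
    ring
  refine ⟨fun t a' _ => key t a', ?_, ?_⟩
  · intro t
    ext a
    simp only [Set.mem_setOf_eq, Set.mem_image, Acts, Finset.mem_image]
    constructor
    · rintro ⟨⟨n, hn, rfl⟩, hmax⟩
      refine ⟨n, ⟨hn, fun m hm => ?_⟩, rfl⟩
      have := hmax ((F t : ℤ) + m) ⟨m, hm, rfl⟩
      have h1 := key t m; have h2 := key t n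
      linarith
    · rintro ⟨n, ⟨hn, hmax⟩, rfl⟩
      refine ⟨⟨n, hn, rfl⟩, ?_⟩
      rintro b ⟨m, hm, rfl⟩
      have := hmax m hm
      have h1 := key t m; have h2 := key t n
      linarith
  · intro nstar hns
    constructor
    · intro hmax t b hb
      obtain ⟨m, hm, rfl⟩ := Finset.mem_image.mp hb
      have := hmax m hm
      have h1 := key t m; have h2 := key t nstar
      linarith
    · intro h m hm
      have := h 0 ((F 0 : ℤ) + m) (Finset.mem_image.mpr ⟨m, hm, rfl⟩)
      have h1 := key 0 m; have h2 := key 0 nstar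
      linarith
end

section
/- Pullback of optimal stochastic policies for the multi-period newsvendor problem: let σ : Z_δ → [0,1] with ∑_{a'∈Z_δ} σ(a') = 1 maximize ∑_{a'∈Z_δ} σ(a')·G(a') among all probability distributions on Z_δ, where G(a') := ∑_{d∈Z_δ} μ(d)·((min(d, a') − min(d, 0))·C_s − a'·C_p). Define the policy Λ(σ) by Λ(σ)(a | s_t) := σ(a − F_t) for a ∈ F_t + Z_δ. Then Λ(σ) is an optimal policy of the newsvendor MDP with discount γ = 0: for every t ∈ ℕ, ∑_{a∈F_t+Z_δ} Λ(σ)(a|s_t)·E(t,a) = max_{a∈F_t+Z_δ} E(t,a). -/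
section OptimalMixedStrategy

variable {ι : Type*} {S : Finset ι} {G σ : ι → ℝ}

lemma sum_mul_le_of_forall_le {M : ℝ} (hσ0 : ∀ a ∈ S, 0 ≤ σ a) (hσ1 : ∑ a ∈ S, σ a = 1)
    (hM : ∀ a ∈ S, G a ≤ M) : ∑ a ∈ S, σ a * G a ≤ M :=
  calc ∑ a ∈ S, σ a * G a ≤ ∑ a ∈ S, σ a * M :=
        Finset.sum_le_sum fun a ha => mul_le_mul_of_nonneg_left (hM a ha) (hσ0 a ha)
    _ = M := by rw [← Finset.sum_mul, hσ1, one_mul]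

lemma le_sum_mul_of_forall_sum_mul_le [DecidableEq ι]
    (hσopt : ∀ τ : ι → ℝ, (∀ a, 0 ≤ τ a) → ∑ a ∈ S, τ a = 1 →
      ∑ a ∈ S, τ a * G a ≤ ∑ a ∈ S, σ a * G a)
    {b : ι} (hb : b ∈ S) : G b ≤ ∑ a ∈ S, σ a * G a := by
  simpa [ite_mul, hb] using
    hσopt (fun a => if a = b then 1 else 0) (fun a => by positivity) (by simp [hb])

lemma isGreatest_sum_mul_of_forall_sum_mul_le [DecidableEq ι] (hσ0 : ∀ a, 0 ≤ σ a)
    (hσ1 : ∑ a ∈ S, σ a = 1)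
    (hσopt : ∀ τ : ι → ℝ, (∀ a, 0 ≤ τ a) → ∑ a ∈ S, τ a = 1 →
      ∑ a ∈ S, τ a * G a ≤ ∑ a ∈ S, σ a * G a) :
    IsGreatest (G '' S) (∑ a ∈ S, σ a * G a) := by
  have hS : S.Nonempty := Finset.nonempty_of_sum_ne_zero (hσ1 ▸ one_ne_zero)
  obtain ⟨m, hm, hmax⟩ := S.exists_max_image G hS
  refine ⟨⟨m, hm, le_antisymm (le_sum_mul_of_forall_sum_mul_le hσopt hm)
    (sum_mul_le_of_forall_le (fun a _ => hσ0 a) hσ1 hmax)⟩, ?_⟩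
  rintro _ ⟨b, hb, rfl⟩
  exact le_sum_mul_of_forall_sum_mul_le hσopt hb

end OptimalMixedStrategy

section Newsvendor

variable (F : ℕ → ℕ) (Z : Finset ℤ) (μ : ℤ → ℝ) (Cs Cp : ℝ) (t : ℕ)

lemma coe_Acts : (Acts F Z t : Set ℤ) = ((F t : ℤ) + ·) '' Z := Finset.coe_image

lemma sum_Acts (f : ℤ → ℝ) :
    ∑ a ∈ Acts F Z t, f a = ∑ a ∈ Z, f ((F t : ℤ) + a) :=
  Finset.sum_image fun _ _ _ _ h => add_left_cancel h

lemma Rew_forecast_add (a d : ℤ) :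
    Rew F Cs Cp t ((F t : ℤ) + a) d =
      ((min d a - min d 0 : ℤ) : ℝ) * Cs - (a : ℝ) * Cp + Rew F Cs Cp t (F t) d := by
  have hmin_a : min ((F t : ℤ) + d) ((F t : ℤ) + a) = (F t : ℤ) + min d a := by omega
  have hmin_0 : min ((F t : ℤ) + d) (F t : ℤ) = (F t : ℤ) + min d 0 := by omega
  simp only [Rew, hmin_a, hmin_0]
  push_cast
  ring

lemma Erw_forecast_add (a : ℤ) :
    Erw F Z μ Cs Cp t ((F t : ℤ) + a) = Gban Z μ Cs Cp a + Erw F Z μ Cs Cp t (F t) := by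
  simp only [Erw, Gban, Rew_forecast_add, mul_add, Finset.sum_add_distrib]

end Newsvendor

theorem newsvendor_pullback_optimal_policy_general
    (F : ℕ → ℕ) (Z : Finset ℤ)
    (μ : ℤ → ℝ)
    (Cp Cs : ℝ)
    (σ : ℤ → ℝ) (hσ0 : ∀ a, 0 ≤ σ a) (hσ1 : ∑ a ∈ Z, σ a = 1)
    (hσopt : ∀ τ : ℤ → ℝ, (∀ a, 0 ≤ τ a) → ∑ a ∈ Z, τ a = 1 →
      ∑ a ∈ Z, τ a * Gban Z μ Cs Cp a ≤ ∑ a ∈ Z, σ a * Gban Z μ Cs Cp a) :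
    ∀ t : ℕ, IsGreatest (Erw F Z μ Cs Cp t '' (Acts F Z t : Set ℤ))
      (∑ a ∈ Acts F Z t, σ (a - (F t : ℤ)) * Erw F Z μ Cs Cp t a) := by
  intro t
  have hshift := Erw_forecast_add F Z μ Cs Cp t
  have hpull : ∑ a ∈ Acts F Z t, σ (a - (F t : ℤ)) * Erw F Z μ Cs Cp t a =
      ∑ a ∈ Z, σ a * Gban Z μ Cs Cp a + Erw F Z μ Cs Cp t (F t) := by
    simp only [sum_Acts, add_sub_cancel_left, hshift, mul_add, Finset.sum_add_distrib,
      ← Finset.sum_mul, hσ1, one_mul]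
  have himage : Erw F Z μ Cs Cp t '' (Acts F Z t : Set ℤ) =
      (· + Erw F Z μ Cs Cp t (F t)) '' (Gban Z μ Cs Cp '' Z) := by
    simp only [coe_Acts, Set.image_image, hshift]
  rw [hpull, himage]
  exact (monotone_id.add_const _).map_isGreatest
    (isGreatest_sum_mul_of_forall_sum_mul_le hσ0 hσ1 hσopt)

/-- Pullback of optimal stochastic policies for the multi-period
newsvendor problem: if a probability distribution `σ` on `Z_δ` maximizes
`∑_{a'} σ(a')·G(a')` among all probability distributions on `Z_δ`, then the pulled-back
policy `Λ(σ)(a | s_t) = σ(a − F_t)` is optimal in the newsvendor MDP with discount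
`γ = 0`: for every day `t`, its one-step expected reward
`∑_{a ∈ F_t+Z_δ} σ(a − F_t)·E(t,a)` is the greatest value of `E(t,·)` on `F_t + Z_δ`. -/
theorem newsvendor_pullback_optimal_policy
    (F : ℕ → ℕ) (Z : Finset ℤ) (hZ0 : (0 : ℤ) ∈ Z)
    (μ : ℤ → ℝ) (hμ0 : ∀ d ∈ Z, 0 ≤ μ d) (hμ1 : ∑ d ∈ Z, μ d = 1)
    (Cp Cs : ℝ) (hCp : 0 < Cp) (hCpCs : Cp < Cs)
    (σ : ℤ → ℝ) (hσ0 : ∀ a, 0 ≤ σ a) (hσ1 : ∑ a ∈ Z, σ a = 1)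
    (hσopt : ∀ τ : ℤ → ℝ, (∀ a, 0 ≤ τ a) → ∑ a ∈ Z, τ a = 1 →
      ∑ a ∈ Z, τ a * Gban Z μ Cs Cp a ≤ ∑ a ∈ Z, σ a * Gban Z μ Cs Cp a) :
    ∀ t : ℕ, IsGreatest (Erw F Z μ Cs Cp t '' (Acts F Z t : Set ℤ))
      (∑ a ∈ Acts F Z t, σ (a - (F t : ℤ)) * Erw F Z μ Cs Cp t a) :=
  newsvendor_pullback_optimal_policy_general F Z μ Cp Cs σ hσ0 hσ1 hσopt
end

section
/- Reduction of the 5-day cycle multi-period newsvendor problem: suppose the deviation distribution on day t is μ_{t mod 5}, where μ_0, ..., μ_4 are probability mass functions on Z_δ, and set E_b(t,a) := ∑_{d∈Z_δ} μ_b(d)·Rew_t(a,d) and G_b(a') := ∑_{d∈Z_δ} μ_b(d)·((min(d, a') − min(d, 0))·C_s − a'·C_p) for b ∈ {0,1,2,3,4}. Then for every t ∈ ℕ and a' ∈ Z_δ, E_{t mod 5}(t, F_t + a') − E_{t mod 5}(t, F_t) = G_{t mod 5}(a'); consequently, if for each b ∈ {0,...,4} the integer n*_b ∈ Z_δ maximizes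 G_b over Z_δ, then for every day t the order a_t := F_t + n*_{t mod 5} maximizes E_{t mod 5}(t, ·) over F_t + Z_δ. -/
open Fin.NatCast

/-! Adding `F_t` commutes with `min`, so the forecast cancels from
`Rew_t(F_t + a', d) - Rew_t(F_t, d)`; averaging against `μ` turns the expected reward, up to the
constant `E(t, F_t)`, into `G(a')`, and maximizing `E(t, ·)` over `F_t + Z_δ` becomes
maximizing `G` over `Z_δ`. -/

theorem Rew_add_sub_Rew (F : ℕ → ℕ) (Cs Cp : ℝ) (t : ℕ) (a' d : ℤ) :
    Rew F Cs Cp t ((F t : ℤ) + a') d - Rew F Cs Cp t (F t : ℤ) d =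
      ((min d a' - min d 0 : ℤ) : ℝ) * Cs - (a' : ℝ) * Cp := by
  have hmin : min ((F t : ℤ) + d) (F t) = F t + min d 0 := by
    rw [← min_add_add_left, add_zero]
  rw [Rew, Rew, min_add_add_left, hmin]
  push_cast
  ring

theorem Erw_add_sub_Erw (F : ℕ → ℕ) (Z : Finset ℤ) (μ : ℤ → ℝ) (Cs Cp : ℝ) (t : ℕ)
    (a' : ℤ) :
    Erw F Z μ Cs Cp t ((F t : ℤ) + a') - Erw F Z μ Cs Cp t (F t : ℤ) = Gban Z μ Cs Cp a' := by
  simp only [Erw, Gban, ← Finset.sum_sub_distrib, ← mul_sub, Rew_add_sub_Rew]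

theorem Erw_le_of_forall_Gban_le (F : ℕ → ℕ) (Z : Finset ℤ) (μ : ℤ → ℝ) (Cs Cp : ℝ)
    (t : ℕ) {n : ℤ} (hn : ∀ m ∈ Z, Gban Z μ Cs Cp m ≤ Gban Z μ Cs Cp n) :
    ∀ b ∈ Acts F Z t, Erw F Z μ Cs Cp t b ≤ Erw F Z μ Cs Cp t ((F t : ℤ) + n) := by
  simp only [Acts, Finset.forall_mem_image]
  intro m hm
  have hshift := Erw_add_sub_Erw F Z μ Cs Cp t
  linarith [hshift m, hshift n, hn m hm]

theorem newsvendor_five_day_cycle_reduction_general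
    (F : ℕ → ℕ) (Z : Finset ℤ)
    (μb : Fin 5 → ℤ → ℝ)
    (Cp Cs : ℝ) :
    (∀ (t : ℕ) (a' : ℤ), a' ∈ Z →
      Erw F Z (μb (t : Fin 5)) Cs Cp t ((F t : ℤ) + a') -
          Erw F Z (μb (t : Fin 5)) Cs Cp t (F t : ℤ) =
        Gban Z (μb (t : Fin 5)) Cs Cp a') ∧
    (∀ nstar : Fin 5 → ℤ,
      (∀ b : Fin 5, nstar b ∈ Z ∧
        ∀ m ∈ Z, Gban Z (μb b) Cs Cp m ≤ Gban Z (μb b) Cs Cp (nstar b)) →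
      ∀ (t : ℕ), ∀ b ∈ Acts F Z t,
        Erw F Z (μb (t : Fin 5)) Cs Cp t b ≤
          Erw F Z (μb (t : Fin 5)) Cs Cp t ((F t : ℤ) + nstar (t : Fin 5))) := by
  refine ⟨fun t a' _ => Erw_add_sub_Erw F Z (μb t) Cs Cp t a', ?_⟩
  intro nstar hnstar t
  exact Erw_le_of_forall_Gban_le F Z (μb t) Cs Cp t (hnstar t).2

/-- Reduction of the 5-day cycle multi-period newsvendor problem: with
the deviation distribution on day `t` given by `μ_{t mod 5}` and
`E_b(t,a) = ∑_d μ_b(d)·Rew_t(a,d)`, we have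
`E_{t mod 5}(t, F_t + a') − E_{t mod 5}(t, F_t) = G_{t mod 5}(a')` for every day `t` and
`a' ∈ Z_δ`; consequently, if `n*_b ∈ Z_δ` maximizes `G_b` over `Z_δ` for each weekday
`b`, then on every day `t` the order `F_t + n*_{t mod 5}` maximizes `E_{t mod 5}(t, ·)`
over `F_t + Z_δ`. -/
theorem newsvendor_five_day_cycle_reduction
    (F : ℕ → ℕ) (Z : Finset ℤ) (hZ0 : (0 : ℤ) ∈ Z)
    (μb : Fin 5 → ℤ → ℝ)
    (hμ0 : ∀ (b : Fin 5), ∀ d ∈ Z, 0 ≤ μb b d)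
    (hμ1 : ∀ b : Fin 5, ∑ d ∈ Z, μb b d = 1)
    (Cp Cs : ℝ) (hCp : 0 < Cp) (hCpCs : Cp < Cs) :
    (∀ (t : ℕ) (a' : ℤ), a' ∈ Z →
      Erw F Z (μb (t : Fin 5)) Cs Cp t ((F t : ℤ) + a') -
          Erw F Z (μb (t : Fin 5)) Cs Cp t (F t : ℤ) =
        Gban Z (μb (t : Fin 5)) Cs Cp a') ∧
    (∀ nstar : Fin 5 → ℤ,
      (∀ b : Fin 5, nstar b ∈ Z ∧
        ∀ m ∈ Z, Gban Z (μb b) Cs Cp m ≤ Gban Z (μb b) Cs Cp (nstar b)) →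
      ∀ (t : ℕ), ∀ b ∈ Acts F Z t,
        Erw F Z (μb (t : Fin 5)) Cs Cp t b ≤
          Erw F Z (μb (t : Fin 5)) Cs Cp t ((F t : ℤ) + nstar (t : Fin 5))) :=
  newsvendor_five_day_cycle_reduction_general F Z μb Cp Cs
end
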